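/- arXiv:2407.09251 — 3 statements merged into one kernel-verified Lean document; each statement's English description precedes it below -/
import Mathlib

section
/- Let d ≥ 2, ε_∞ > 0, and ε₁ ∈ (ε_∞, d·ε_∞). Let C be the convex hull of B₁(ε₁) ∪ B_∞(ε_∞), where B₁(ε₁) and B_∞(ε_∞) are the ℓ₁ and ℓ_∞ balls centered at the origin. Then for p ∈ (1, ∞) with 1/p + 1/q = 1, the minimal ℓ_p distance from the origin to the complement ℝ^d \ C equals ε₁ / (ε₁/ε_∞ - β + β^q)^{1/q}, where β = ε₁/ε_∞ - ⌊ε₁/ε_∞⌋. -/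
open scoped ENNReal

private lemma rpow_peel {q c : ℝ} (hq : 1 ≤ q) (hc0 : 0 ≤ c) :
    c ^ q = c ^ (q - 1) * c := by
  nth_rewrite 3 [← Real.rpow_one c]
  rw [← Real.rpow_add' hc0 (by norm_num; linarith : q - 1 + 1 ≠ 0)]
  norm_num

private lemma rpow_superadd {q a b : ℝ} (hq : 1 ≤ q) (ha : 0 ≤ a) (hb : 0 ≤ b) :
    a ^ q + b ^ q ≤ (a + b) ^ q := by
  have hq0 : q ≠ 0 := by positivity
  rcases eq_or_lt_of_le (by positivity : (0:ℝ) ≤ a + b) with h | h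
  · have ha0 : a = 0 := by linarith [hb]
    have hb0 : b = 0 := by linarith [ha]
    simp [ha0, hb0, Real.zero_rpow hq0]
  · have key : ∀ c : ℝ, 0 ≤ c → c ≤ a + b → c ^ q ≤ (a + b) ^ (q - 1) * c := by
      intro c hc0 hc
      rw [rpow_peel hq hc0]
      exact mul_le_mul_of_nonneg_right
        (Real.rpow_le_rpow hc0 hc (by linarith)) hc0
    have h1 := key a ha (by linarith)
    have h2 := key b hb (by linarith)
    have h3 : (a + b) ^ (q - 1) * a + (a + b) ^ (q - 1) * b = (a + b) ^ q := by
      rw [rpow_peel hq (le_of_lt h)]; ring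
    linarith

private lemma rpow_two_point {q a b : ℝ} (hq : 1 ≤ q) (ha0 : 0 ≤ a) (ha1 : a ≤ 1)
    (hb0 : 0 ≤ b) (hb1 : b ≤ 1) (hab : 1 ≤ a + b) :
    a ^ q + b ^ q ≤ 1 + (a + b - 1) ^ q := by
  set c := a + b - 1 with hc
  have hc0 : 0 ≤ c := by rw [hc]; linarith
  have hc1 : c ≤ 1 := by rw [hc]; linarith
  rcases eq_or_lt_of_le hc1 with h | h
  · have ha : a = 1 := by rw [hc] at h; linarith
    have hb : b = 1 := by rw [hc] at h; linarith
    rw [ha, hb]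
    simp [Real.one_rpow]
    rw [h, Real.one_rpow]
  · set l := (1 - a) / (1 - c) with hl
    have h1c : 0 < 1 - c := by linarith
    have hl0 : 0 ≤ l := by
      apply div_nonneg <;> linarith
    have hl1 : l ≤ 1 := by
      rw [hl, div_le_one h1c]; rw [hc]; linarith
    have hcv := (convexOn_rpow hq).2 (Set.mem_Ici.2 hc0) (Set.mem_Ici.2 zero_le_one)
    have hA := hcv hl0 (by linarith : (0:ℝ) ≤ 1 - l) (by ring)
    have hB := hcv (by linarith : (0:ℝ) ≤ 1 - l) hl0 (by ring)
    have haeq : l • c + (1 - l) • (1:ℝ) = a := by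
      simp only [smul_eq_mul, mul_one, hl]
      field_simp
      ring
    have hbeq : (1 - l) • c + l • (1:ℝ) = b := by
      simp only [smul_eq_mul, mul_one, hl]
      field_simp
      rw [hc]; ring
    rw [haeq] at hA
    rw [hbeq] at hB
    simp only [smul_eq_mul, Real.one_rpow, mul_one] at hA hB
    nlinarith [hA, hB]

noncomputable def crF (q S : ℝ) : ℝ := (⌊S⌋ : ℝ) + Int.fract S ^ q

lemma crF_add_int (q S : ℝ) (n : ℤ) : crF q (S + n) = crF q S + n := by
  unfold crF
  rw [Int.floor_add_intCast, Int.fract_add_intCast]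
  push_cast
  ring

lemma crF_mono {q : ℝ} (hq : 1 ≤ q) {S T : ℝ} (h : S ≤ T) : crF q S ≤ crF q T := by
  have hfr : ∀ x : ℝ, (0:ℝ) ≤ Int.fract x := fun x => Int.fract_nonneg x
  have hq0 : 0 ≤ q := by linarith
  rcases eq_or_lt_of_le (Int.floor_mono h : ⌊S⌋ ≤ ⌊T⌋) with hf | hf
  · unfold crF
    rw [← hf]
    have : Int.fract S ≤ Int.fract T := by
      unfold Int.fract; rw [← hf]; linarith
    exact add_le_add le_rfl (Real.rpow_le_rpow (hfr S) this hq0)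
  · unfold crF
    have h1 : Int.fract S ^ q ≤ 1 :=
      Real.rpow_le_one (hfr S) (le_of_lt (Int.fract_lt_one S)) hq0
    have h2 : (0:ℝ) ≤ Int.fract T ^ q := Real.rpow_nonneg (hfr T) q
    have : (⌊S⌋ : ℝ) + 1 ≤ (⌊T⌋ : ℝ) := by exact_mod_cast hf
    linarith

lemma crF_step {q : ℝ} (hq : 1 ≤ q) {a : ℝ} (S : ℝ) (ha0 : 0 ≤ a) (ha1 : a ≤ 1) :
    crF q S + a ^ q ≤ crF q (S + a) := by
  have hb0 : (0:ℝ) ≤ Int.fract S := Int.fract_nonneg S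
  have hb1 : Int.fract S < 1 := Int.fract_lt_one S
  have hsplit : S + a = (Int.fract S + a) + (⌊S⌋ : ℤ) := by
    unfold Int.fract; push_cast; ring
  rw [hsplit, crF_add_int]
  have hS : crF q S = Int.fract S ^ q + (⌊S⌋ : ℝ) := by
    unfold crF; ring
  rw [hS]
  have key : Int.fract S ^ q + a ^ q ≤ crF q (Int.fract S + a) := by
    set x := Int.fract S + a with hx
    have hx0 : 0 ≤ x := by positivity
    rcases lt_or_ge x 1 with h | h
    · have hfl : ⌊x⌋ = 0 := Int.floor_eq_zero_iff.2 ⟨hx0, h⟩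
      have : crF q x = x ^ q := by
        unfold crF Int.fract
        rw [hfl]
        push_cast
        ring_nf
      rw [this, hx]
      exact rpow_superadd hq hb0 ha0
    · have hx2 : x < 2 := by rw [hx]; linarith
      have hfl : ⌊x⌋ = 1 :=
        Int.floor_eq_iff.2 ⟨by push_cast; linarith, by push_cast; linarith⟩
      have : crF q x = 1 + (x - 1) ^ q := by
        unfold crF Int.fract
        rw [hfl]
        push_cast
        ring_nf
      rw [this, hx]
      exact rpow_two_point hq hb0 (le_of_lt hb1) ha0 ha1 (by linarith)
  linarith

lemma crF_sum {q : ℝ} (hq : 1 ≤ q) {ι : Type*} [DecidableEq ι] (t : Finset ι) (u : ι → ℝ)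
    (h0 : ∀ i ∈ t, 0 ≤ u i) (h1 : ∀ i ∈ t, u i ≤ 1) :
    ∑ i ∈ t, u i ^ q ≤ crF q (∑ i ∈ t, u i) := by
  induction t using Finset.induction_on with
  | empty =>
      simp [crF, Real.zero_rpow (by positivity : q ≠ 0)]
  | @insert a s hnotmem ih =>
      rw [Finset.sum_insert hnotmem, Finset.sum_insert hnotmem]
      have hIH := ih (fun i hi => h0 i (Finset.mem_insert_of_mem hi))
        (fun i hi => h1 i (Finset.mem_insert_of_mem hi))
      have hstep := crF_step hq (∑ i ∈ s, u i)
        (h0 a (Finset.mem_insert_self a s)) (h1 a (Finset.mem_insert_self a s))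
      calc u a ^ q + ∑ i ∈ s, u i ^ q ≤ u a ^ q + crF q (∑ i ∈ s, u i) := by linarith
        _ ≤ crF q (∑ i ∈ s, u i + u a) := by linarith [hstep]
        _ = crF q (u a + ∑ i ∈ s, u i) := by rw [add_comm]

private lemma sum_pw {d K : ℕ} (hKd : K < d) (c1 cβ : ℝ) :
    ∑ i : Fin d, (if (i : ℕ) < K then c1 else if (i : ℕ) = K then cβ else 0)
      = K * c1 + cβ := by
  rw [Fin.sum_univ_eq_sum_range (fun j => if j < K then c1 else if j = K then cβ else 0) d]
  rw [← Finset.sum_subset (Finset.range_subset_range.2 hKd : Finset.range (K+1) ⊆ Finset.range d)]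
  · rw [Finset.sum_range_succ]
    have h1 : ∀ j ∈ Finset.range K,
        (if j < K then c1 else if j = K then cβ else 0) = c1 := fun j hj =>
      if_pos (Finset.mem_range.1 hj)
    rw [Finset.sum_congr rfl h1, Finset.sum_const, Finset.card_range, nsmul_eq_mul,
      if_neg (lt_irrefl K), if_pos rfl]
  · intro j _ hnj
    rw [Finset.mem_range] at hnj
    rw [if_neg (by omega), if_neg (by omega)]


/-- The `ℓ_p` norm of a vector in `ℝ^d`. -/
noncomputable def pnorm (p : ℝ≥0∞) {d : ℕ} (x : Fin d → ℝ) : ℝ :=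
  ‖(WithLp.equiv p (Fin d → ℝ)).symm x‖

set_option maxHeartbeats 1000000 in
/-- Croce–Hein: minimal `ℓ_p` distance from the origin to the complement of the convex
hull of the `ℓ₁` and `ℓ_∞` balls. -/
theorem minimal_lp_distance_to_complement {d : ℕ} (hd : 2 ≤ d) (ε₁ εinf : ℝ)
    (hinf : 0 < εinf) (hε : ε₁ ∈ Set.Ioo εinf ((d : ℝ) * εinf))
    (p q : ℝ) (hp : 1 < p) (hq : 1 < q) (hpq : 1 / p + 1 / q = 1) :
    let C := convexHull ℝ
      ({x : Fin d → ℝ | pnorm 1 x ≤ ε₁} ∪ {x : Fin d → ℝ | pnorm ∞ x ≤ εinf})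
    let β : ℝ := ε₁ / εinf - (⌊ε₁ / εinf⌋ : ℝ)
    sInf (pnorm (ENNReal.ofReal p) '' Cᶜ) =
      ε₁ / (ε₁ / εinf - β + β ^ q) ^ (1 / q) := by
  intro C β
  obtain ⟨hε1, hεd⟩ := hε
  have hε₁pos : 0 < ε₁ := lt_trans hinf hε1
  have hp0 : 0 < p := lt_trans one_pos hp
  have hq0 : 0 < q := lt_trans one_pos hq
  haveI hfact : Fact (1 ≤ ENNReal.ofReal p) := ⟨ENNReal.one_le_ofReal.2 hp.le⟩
  haveI : Nonempty (Fin d) := ⟨⟨0, by omega⟩⟩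
  set s : ℝ := ε₁ / εinf with hs
  have hs1 : 1 < s := (one_lt_div hinf).2 hε1
  have hsd : s < d := (div_lt_iff₀ hinf).2 (by linarith)
  have hβfract : β = Int.fract s := rfl
  have hβ0 : 0 ≤ β := by rw [hβfract]; exact Int.fract_nonneg s
  have hβ1 : β < 1 := by rw [hβfract]; exact Int.fract_lt_one s
  set K : ℕ := ⌊s⌋.toNat with hKdef
  have hKfloor : (K : ℤ) = ⌊s⌋ := Int.toNat_of_nonneg (Int.floor_nonneg.2 (by linarith))
  have hKβ : (K : ℝ) + β = s := by
    rw [hβfract]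
    have : ((K : ℤ) : ℝ) = (⌊s⌋ : ℝ) := by exact_mod_cast hKfloor
    push_cast at this ⊢
    rw [this]
    unfold Int.fract
    ring
  have hK1 : 1 ≤ K := by
    have : (1 : ℤ) ≤ ⌊s⌋ := Int.le_floor.2 (by push_cast; linarith)
    omega
  have hKd : K < d := by
    have : (K : ℤ) < (d : ℤ) := by rw [hKfloor]; exact Int.floor_lt.2 (by push_cast; linarith)
    exact_mod_cast this
  set D : ℝ := (K : ℝ) + β ^ q with hD
  have hβq0 : 0 ≤ β ^ q := Real.rpow_nonneg hβ0 q
  have hD1 : 1 ≤ D := by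
    have : (1:ℝ) ≤ (K:ℝ) := by exact_mod_cast hK1
    rw [hD]; linarith
  have hD0 : 0 < D := lt_of_lt_of_le one_pos hD1
  have hDgoal : ε₁ / εinf - β + β ^ q = D := by
    rw [hD]
    have : ε₁ / εinf - β = (K : ℝ) := by rw [← hs]; linarith [hKβ]
    rw [this]
  rw [hDgoal]
  set r : ℝ := ε₁ / D ^ (1 / q) with hr
  have hDq : 0 < D ^ (1 / q) := Real.rpow_pos_of_pos hD0 _
  have hr0 : 0 < r := div_pos hε₁pos hDq
  -- norm evaluation lemmas
  have hpnormp : ∀ x : Fin d → ℝ,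
      pnorm (ENNReal.ofReal p) x = (∑ i, |x i| ^ p) ^ (1 / p) := by
    intro x
    unfold pnorm
    rw [PiLp.norm_eq_sum (by rw [ENNReal.toReal_ofReal hp0.le]; exact hp0)]
    simp only [WithLp.equiv_symm_apply, WithLp.ofLp_toLp, PiLp.toLp_apply, Real.norm_eq_abs, ENNReal.toReal_ofReal hp0.le]
  have hpnorm1 : ∀ x : Fin d → ℝ, pnorm 1 x = ∑ i, |x i| := by
    intro x
    unfold pnorm
    rw [PiLp.norm_eq_sum (by norm_num)]
    simp [WithLp.equiv_symm_apply, WithLp.ofLp_toLp, PiLp.toLp_apply, Real.norm_eq_abs]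
  have hpnorminf : ∀ x : Fin d → ℝ, pnorm ∞ x ≤ εinf ↔ ∀ i, |x i| ≤ εinf := by
    intro x
    unfold pnorm
    rw [PiLp.norm_eq_ciSup]
    simp only [WithLp.equiv_symm_apply, WithLp.ofLp_toLp, PiLp.toLp_apply, Real.norm_eq_abs]
    constructor
    · intro h i
      exact le_trans (le_ciSup (f := fun j => |x j|) (Set.Finite.bddAbove (Set.finite_range _)) i) h
    · intro h
      exact ciSup_le h
  set B1 : Set (Fin d → ℝ) := {x : Fin d → ℝ | pnorm 1 x ≤ ε₁} with hB1def
  set Binf : Set (Fin d → ℝ) := {x : Fin d → ℝ | pnorm ∞ x ≤ εinf} with hBinfdef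
  have hCdef : C = convexHull ℝ (B1 ∪ Binf) := rfl
  have hCconvex : Convex ℝ C := convex_convexHull ℝ _
  have hB1convex : Convex ℝ B1 := by
    intro x hx y hy a b ha hb hab
    simp only [hB1def, Set.mem_setOf_eq, hpnorm1] at hx hy ⊢
    calc ∑ i, |(a • x + b • y) i| ≤ ∑ i, (a * |x i| + b * |y i|) := by
          apply Finset.sum_le_sum
          intro i _
          simp only [Pi.add_apply, Pi.smul_apply, smul_eq_mul]
          calc |a * x i + b * y i| ≤ |a * x i| + |b * y i| := abs_add_le _ _
            _ = a * |x i| + b * |y i| := by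
                rw [abs_mul, abs_mul, abs_of_nonneg ha, abs_of_nonneg hb]
      _ = a * ∑ i, |x i| + b * ∑ i, |y i| := by
          rw [Finset.sum_add_distrib, Finset.mul_sum, Finset.mul_sum]
      _ ≤ a * ε₁ + b * ε₁ :=
          add_le_add (mul_le_mul_of_nonneg_left hx ha) (mul_le_mul_of_nonneg_left hy hb)
      _ = ε₁ := by rw [← add_mul, hab, one_mul]
  have hBinfconvex : Convex ℝ Binf := by
    intro x hx y hy a b ha hb hab
    simp only [hBinfdef, Set.mem_setOf_eq, hpnorminf] at hx hy ⊢
    intro i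
    simp only [Pi.add_apply, Pi.smul_apply, smul_eq_mul]
    calc |a * x i + b * y i| ≤ |a * x i| + |b * y i| := abs_add_le _ _
      _ = a * |x i| + b * |y i| := by
          rw [abs_mul, abs_mul, abs_of_nonneg ha, abs_of_nonneg hb]
      _ ≤ a * εinf + b * εinf :=
          add_le_add (mul_le_mul_of_nonneg_left (hx i) ha) (mul_le_mul_of_nonneg_left (hy i) hb)
      _ = εinf := by rw [← add_mul, hab, one_mul]
  have hB1ne : B1.Nonempty := by
    refine ⟨0, ?_⟩
    simp only [hB1def, Set.mem_setOf_eq, hpnorm1]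
    simpa using hε₁pos.le
  have hBinfne : Binf.Nonempty := by
    refine ⟨0, ?_⟩
    simp only [hBinfdef, Set.mem_setOf_eq, hpnorminf]
    intro i
    simpa using hinf.le
  have hB1compact : IsCompact B1 := by
    apply Metric.isCompact_of_isClosed_isBounded
    · have : B1 = {x : Fin d → ℝ | ∑ i, |x i| ≤ ε₁} := by
        ext x; simp [hB1def, hpnorm1]
      rw [this]
      exact isClosed_le (continuous_finset_sum _ fun i _ => (continuous_apply i).abs)
        continuous_const
    · refine Metric.isBounded_closedBall (x := (0 : Fin d → ℝ)) (r := ε₁) |>.subset ?_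
      intro x hx
      rw [Metric.mem_closedBall, dist_zero_right]
      rw [pi_norm_le_iff_of_nonneg hε₁pos.le]
      intro i
      rw [Real.norm_eq_abs]
      have hx' : ∑ j, |x j| ≤ ε₁ := by rw [← hpnorm1]; exact hx
      exact le_trans
        (Finset.single_le_sum (fun j _ => abs_nonneg (x j)) (Finset.mem_univ i)) hx'
  have hBinfcompact : IsCompact Binf := by
    apply Metric.isCompact_of_isClosed_isBounded
    · have : Binf = ⋂ i, {x : Fin d → ℝ | |x i| ≤ εinf} := by
        ext x; simp [hBinfdef, hpnorminf]
      rw [this]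
      exact isClosed_iInter fun i => isClosed_le ((continuous_apply i).abs) continuous_const
    · refine Metric.isBounded_closedBall (x := (0 : Fin d → ℝ)) (r := εinf) |>.subset ?_
      intro x hx
      rw [Metric.mem_closedBall, dist_zero_right]
      rw [pi_norm_le_iff_of_nonneg hinf.le]
      intro i
      rw [Real.norm_eq_abs]
      exact (hpnorminf x).1 hx i
  have hCjoin : C = convexJoin ℝ B1 Binf := by
    rw [hCdef, Convex.convexHull_union hB1convex hBinfconvex hB1ne hBinfne]
  have hCcompact : IsCompact C := by
    rw [hCjoin]
    have himg : convexJoin ℝ B1 Binf =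
        (fun pt : ℝ × ((Fin d → ℝ) × (Fin d → ℝ)) =>
          pt.1 • pt.2.1 + (1 - pt.1) • pt.2.2) ''
          ((Set.Icc (0:ℝ) 1) ×ˢ (B1 ×ˢ Binf)) := by
      ext x
      simp only [mem_convexJoin, Set.mem_image, Set.mem_prod, Set.mem_Icc, segment,
        Set.mem_setOf_eq]
      constructor
      · rintro ⟨a, ha, b, hb, u, v, hu, hv, huv, hx⟩
        refine ⟨(u, a, b), ⟨⟨hu, by linarith⟩, ha, hb⟩, ?_⟩
        simp only
        rw [show 1 - u = v by linarith]
        exact hx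
      · rintro ⟨⟨t, a, b⟩, ⟨⟨ht0, ht1⟩, ha, hb⟩, hx⟩
        exact ⟨a, ha, b, hb, t, 1 - t, ht0, by linarith, by ring, hx⟩
    rw [himg]
    exact ((isCompact_Icc.prod (hB1compact.prod hBinfcompact))).image (by fun_prop)
  have hCclosed : IsClosed C := hCcompact.isClosed
  have h0C : (0 : Fin d → ℝ) ∈ C := by
    apply subset_convexHull ℝ _
    left
    simp only [hB1def, Set.mem_setOf_eq, hpnorm1]
    simpa using hε₁pos.le
  -- halfspace bound
  have hhalf : ∀ w : Fin d → ℝ, (∀ i, |w i| ≤ 1) → (∑ i, |w i|) ≤ s →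
      ∀ y ∈ C, ∑ i, w i * y i ≤ ε₁ := by
    intro w hwi hw1 y hy
    have hsubset : C ⊆ {y : Fin d → ℝ | ∑ i, w i * y i ≤ ε₁} := by
      rw [hCdef]
      apply convexHull_min
      · rintro z (hz | hz)
        · have hz' : ∑ i, |z i| ≤ ε₁ := by rw [← hpnorm1]; exact hz
          show ∑ i, w i * z i ≤ ε₁
          calc ∑ i, w i * z i ≤ ∑ i, |z i| := by
                apply Finset.sum_le_sum
                intro i _
                calc w i * z i ≤ |w i * z i| := le_abs_self _
                  _ = |w i| * |z i| := abs_mul _ _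
                  _ ≤ 1 * |z i| := mul_le_mul_of_nonneg_right (hwi i) (abs_nonneg _)
                  _ = |z i| := one_mul _
            _ ≤ ε₁ := hz'
        · have hz' : ∀ i, |z i| ≤ εinf := (hpnorminf z).1 hz
          show ∑ i, w i * z i ≤ ε₁
          calc ∑ i, w i * z i ≤ ∑ i, |w i| * εinf := by
                apply Finset.sum_le_sum
                intro i _
                calc w i * z i ≤ |w i * z i| := le_abs_self _
                  _ = |w i| * |z i| := abs_mul _ _
                  _ ≤ |w i| * εinf := mul_le_mul_of_nonneg_left (hz' i) (abs_nonneg _)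
            _ = (∑ i, |w i|) * εinf := (Finset.sum_mul _ _ _).symm
            _ ≤ s * εinf := mul_le_mul_of_nonneg_right hw1 hinf.le
            _ = ε₁ := by rw [hs]; field_simp
      · refine convex_halfSpace_le ⟨fun a b => ?_, fun c a => ?_⟩ ε₁
        · simp only [Pi.add_apply, mul_add]
          rw [Finset.sum_add_distrib]
        · simp only [Pi.smul_apply, smul_eq_mul]
          rw [Finset.mul_sum]
          apply Finset.sum_congr rfl
          intros; ring
    exact hsubset hy
  -- the extremal vector and point
  set w : Fin d → ℝ := fun i => if (i : ℕ) < K then 1 else if (i : ℕ) = K then β else 0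
    with hw
  set xstar : Fin d → ℝ :=
    fun i => (ε₁ / D) * (if (i : ℕ) < K then 1 else if (i : ℕ) = K then β ^ (q - 1) else 0)
    with hxstar
  have hwbound : ∀ i, |w i| ≤ 1 := by
    intro i
    simp only [hw]
    split_ifs <;> simp [abs_of_nonneg hβ0, hβ1.le]
  have hwsum : ∑ i, |w i| = s := by
    have hterm : ∀ i : Fin d,
        |w i| = (if (i:ℕ) < K then (1:ℝ) else if (i:ℕ) = K then β else 0) := by
      intro i
      simp only [hw]
      split_ifs <;> simp [abs_of_nonneg hβ0]
    rw [Finset.sum_congr rfl (fun i _ => hterm i), sum_pw hKd, mul_one]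
    exact hKβ
  have hfx : ∑ i, w i * xstar i = ε₁ := by
    have hterm : ∀ i : Fin d, w i * xstar i =
        (ε₁ / D) * (if (i:ℕ) < K then (1:ℝ) else if (i:ℕ) = K then β ^ q else 0) := by
      intro i
      simp only [hw, hxstar]
      by_cases h1 : (i:ℕ) < K
      · rw [if_pos h1, if_pos h1, if_pos h1]; ring
      · rw [if_neg h1, if_neg h1, if_neg h1]
        by_cases h2 : (i:ℕ) = K
        · rw [if_pos h2, if_pos h2, if_pos h2, rpow_peel hq.le hβ0]
          ring
        · rw [if_neg h2, if_neg h2, if_neg h2]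
          ring
    rw [Finset.sum_congr rfl (fun i _ => hterm i), ← Finset.mul_sum, sum_pw hKd, mul_one,
      ← hD]
    exact div_mul_cancel₀ ε₁ (ne_of_gt hD0)
  have hqp : (q - 1) * p = q := by
    have h := hpq
    field_simp at h
    nlinarith [h]
  have hxnorm : pnorm (ENNReal.ofReal p) xstar = r := by
    rw [hpnormp]
    have hterm : ∀ i : Fin d, |xstar i| ^ p =
        (ε₁ / D) ^ p * (if (i:ℕ) < K then (1:ℝ) else if (i:ℕ) = K then β ^ q else 0) := by
      intro i
      simp only [hxstar]
      have hc : (0:ℝ) ≤ ε₁ / D := by positivity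
      by_cases h1 : (i:ℕ) < K
      · rw [if_pos h1, if_pos h1, mul_one, abs_of_nonneg hc, mul_one]
      · rw [if_neg h1, if_neg h1]
        by_cases h2 : (i:ℕ) = K
        · rw [if_pos h2, if_pos h2,
            abs_of_nonneg (by positivity : (0:ℝ) ≤ ε₁/D * β^(q-1)),
            Real.mul_rpow hc (Real.rpow_nonneg hβ0 _),
            ← Real.rpow_mul hβ0, hqp]
        · rw [if_neg h2, if_neg h2, mul_zero, abs_zero,
            Real.zero_rpow (ne_of_gt hp0), mul_zero]
    rw [Finset.sum_congr rfl (fun i _ => hterm i), ← Finset.mul_sum, sum_pw hKd, mul_one,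
      ← hD]
    rw [Real.mul_rpow (Real.rpow_nonneg (by positivity) p) hD0.le,
      ← Real.rpow_mul (by positivity : (0:ℝ) ≤ ε₁/D), mul_one_div_cancel (ne_of_gt hp0),
      Real.rpow_one]
    have hDsplit : D ^ (1/p) * D ^ (1/q) = D := by
      rw [← Real.rpow_add hD0, hpq, Real.rpow_one]
    rw [hr, eq_div_iff (ne_of_gt hDq)]
    rw [mul_assoc, hDsplit]
    exact div_mul_cancel₀ ε₁ (ne_of_gt hD0)
  have houtside : ∀ t : ℝ, 1 < t → (t • xstar ∈ Cᶜ ∧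
      pnorm (ENNReal.ofReal p) (t • xstar) = t * r) := by
    intro t ht
    constructor
    · rw [Set.mem_compl_iff]
      intro hmem
      have hb := hhalf w hwbound (le_of_eq hwsum) (t • xstar) hmem
      have heval : ∑ i, w i * (t • xstar) i = t * ε₁ := by
        simp only [Pi.smul_apply, smul_eq_mul]
        rw [← hfx, Finset.mul_sum]
        exact Finset.sum_congr rfl fun i _ => by ring
      rw [heval] at hb
      nlinarith
    · unfold pnorm
      have hsm : (WithLp.equiv (ENNReal.ofReal p) (Fin d → ℝ)).symm (t • xstar) =
          t • (WithLp.equiv (ENNReal.ofReal p) (Fin d → ℝ)).symm xstar := rfl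
      rw [hsm, norm_smul, Real.norm_eq_abs, abs_of_pos (by linarith : (0:ℝ) < t)]
      have hx := hxnorm
      unfold pnorm at hx
      rw [hx]
  have hbdd : BddBelow (pnorm (ENNReal.ofReal p) '' Cᶜ) := by
    refine ⟨0, ?_⟩
    rintro y ⟨x, _, rfl⟩
    exact norm_nonneg ((WithLp.equiv (ENNReal.ofReal p) (Fin d → ℝ)).symm x)
  have hne : (pnorm (ENNReal.ofReal p) '' Cᶜ).Nonempty := by
    obtain ⟨hmem, _⟩ := houtside 2 one_lt_two
    exact ⟨_, Set.mem_image_of_mem _ hmem⟩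
  -- lower bound
  have hsε : s * εinf = ε₁ := by rw [hs]; field_simp
  have hlow : ∀ x : Fin d → ℝ, x ∉ C → r ≤ pnorm (ENNReal.ofReal p) x := by
    intro x hx
    obtain ⟨f, u, hfC, hfx'⟩ := geometric_hahn_banach_closed_point hCconvex hCclosed hx
    set wv : Fin d → ℝ := fun i => f (Pi.single i 1) with hwv
    have hfeval : ∀ y : Fin d → ℝ, f y = ∑ i, y i * wv i := by
      intro y
      conv_lhs => rw [pi_eq_sum_univ y]
      rw [map_sum]
      refine Finset.sum_congr rfl fun i _ => ?_
      have hsingle : (fun j => if i = j then (1:ℝ) else 0) = Pi.single i 1 := by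
        funext j
        rw [Pi.single_apply]
        exact if_congr eq_comm rfl rfl
      rw [map_smul, smul_eq_mul, hsingle]
    have hu0 : 0 < u := by
      have := hfC 0 h0C
      rwa [map_zero] at this
    have hcoord : ∀ i, ε₁ * |wv i| ≤ u := by
      intro i
      set c : ℝ := if 0 ≤ wv i then ε₁ else -ε₁ with hc
      have habs : |c| = ε₁ := by
        rw [hc]; split_ifs <;> simp [abs_of_pos hε₁pos]
      set z : Fin d → ℝ := fun j => if j = i then c else 0 with hz
      have hzB : z ∈ B1 := by
        simp only [hB1def, Set.mem_setOf_eq, hpnorm1]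
        have hsum : ∑ j, |z j| = ∑ j, (if j = i then ε₁ else 0) := by
          refine Finset.sum_congr rfl fun j _ => ?_
          simp only [hz]
          by_cases hji : j = i
          · rw [if_pos hji, if_pos hji, habs]
          · rw [if_neg hji, if_neg hji, abs_zero]
        rw [hsum, Finset.sum_ite_eq' Finset.univ i fun _ => ε₁]
        simp
      have hmem : z ∈ C := subset_convexHull ℝ _ (Or.inl hzB)
      have hlt := hfC _ hmem
      rw [hfeval] at hlt
      have heq : ∑ j, z j * wv j = c * wv i := by
        have hterm : ∀ j, z j * wv j = if j = i then c * wv j else 0 := by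
          intro j; simp only [hz]; split_ifs <;> ring
        rw [Finset.sum_congr rfl fun j _ => hterm j,
          Finset.sum_ite_eq' Finset.univ i fun j => c * wv j]
        simp
      rw [heq] at hlt
      have hceq : c * wv i = ε₁ * |wv i| := by
        rw [hc]; split_ifs with h
        · rw [abs_of_nonneg h]
        · rw [abs_of_neg (lt_of_not_ge h)]; ring
      rw [hceq] at hlt
      exact hlt.le
    have hL : εinf * (∑ i, |wv i|) ≤ u := by
      set y0 : Fin d → ℝ := fun i => if 0 ≤ wv i then εinf else -εinf with hy0
      have hyB : y0 ∈ Binf := by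
        simp only [hBinfdef, Set.mem_setOf_eq, hpnorminf]
        intro i
        simp only [hy0]
        split_ifs <;> simp [abs_of_pos hinf]
      have hmem : y0 ∈ C := subset_convexHull ℝ _ (Or.inr hyB)
      have hlt := hfC _ hmem
      rw [hfeval] at hlt
      have heq : ∑ i, y0 i * wv i = εinf * ∑ i, |wv i| := by
        rw [Finset.mul_sum]
        refine Finset.sum_congr rfl fun i _ => ?_
        simp only [hy0]
        split_ifs with h
        · rw [abs_of_nonneg h]
        · rw [abs_of_neg (lt_of_not_ge h)]; ring
      rw [heq] at hlt
      exact hlt.le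
    set W := ∑ i, |wv i| ^ q with hW
    have hW0 : (0:ℝ) ≤ W := Finset.sum_nonneg fun i _ => Real.rpow_nonneg (abs_nonneg _) q
    have hkey : W ≤ D * (u / ε₁) ^ q := by
      have ht01 : ∀ i ∈ Finset.univ, (0:ℝ) ≤ ε₁ * |wv i| / u := fun i _ => by positivity
      have ht1 : ∀ i ∈ Finset.univ (α := Fin d), ε₁ * |wv i| / u ≤ 1 := fun i _ =>
        (div_le_one hu0).2 (hcoord i)
      have hsum := crF_sum hq.le Finset.univ (fun i => ε₁ * |wv i| / u) ht01 ht1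
      have hsums : ∑ i, ε₁ * |wv i| / u ≤ s := by
        rw [← Finset.sum_div, ← Finset.mul_sum, div_le_iff₀ hu0]
        calc ε₁ * ∑ i, |wv i| = s * (εinf * ∑ i, |wv i|) := by rw [← hsε]; ring
          _ ≤ s * u := mul_le_mul_of_nonneg_left hL (by linarith)
      have hKR : ((⌊s⌋ : ℤ) : ℝ) = (K:ℝ) := by exact_mod_cast hKfloor.symm
      have hcrs : crF q s = D := by
        unfold crF
        rw [hD, ← hβfract, hKR]
      have hchain := le_trans hsum (crF_mono hq.le hsums)
      rw [hcrs] at hchain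
      have hterm : ∀ i : Fin d, (ε₁ * |wv i| / u) ^ q = (ε₁/u)^q * |wv i|^q := by
        intro i
        rw [show ε₁ * |wv i| / u = (ε₁/u) * |wv i| by ring,
          Real.mul_rpow (by positivity) (abs_nonneg _)]
      rw [Finset.sum_congr rfl (fun i _ => hterm i), ← Finset.mul_sum, ← hW] at hchain
      have hinv : (ε₁/u)^q * (u/ε₁)^q = 1 := by
        rw [← Real.mul_rpow (by positivity) (by positivity),
          show ε₁/u * (u/ε₁) = 1 by field_simp, Real.one_rpow]
      have huε : (0:ℝ) < (u/ε₁)^q := Real.rpow_pos_of_pos (by positivity) q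
      nlinarith [hchain, huε]
    have hWq : W ^ (1/q) ≤ D ^ (1/q) * (u/ε₁) := by
      calc W ^ (1/q) ≤ (D * (u/ε₁)^q) ^ (1/q) :=
            Real.rpow_le_rpow hW0 hkey (by positivity)
        _ = D^(1/q) * (u/ε₁) := by
            rw [Real.mul_rpow hD0.le (Real.rpow_nonneg (by positivity) q),
              ← Real.rpow_mul (by positivity : (0:ℝ) ≤ u/ε₁),
              mul_one_div_cancel (ne_of_gt hq0), Real.rpow_one]
    have hconje : p.HolderConjugate q := Real.holderConjugate_iff.2 ⟨hp, by rw [← one_div, ← one_div]; exact hpq⟩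
    have hHolder := Real.inner_le_Lp_mul_Lq Finset.univ x wv hconje
    have hfxval : u < ∑ i, x i * wv i := by rw [← hfeval]; exact hfx'
    have hpx : (∑ i, |x i|^p)^(1/p) = pnorm (ENNReal.ofReal p) x := (hpnormp x).symm
    have hpx0 : (0:ℝ) ≤ pnorm (ENNReal.ofReal p) x := by rw [← hpx]; positivity
    have hchain2 : u < pnorm (ENNReal.ofReal p) x * (D^(1/q) * (u/ε₁)) := by
      calc u < ∑ i, x i * wv i := hfxval
        _ ≤ (∑ i, |x i|^p)^(1/p) * (∑ i, |wv i|^q)^(1/q) := hHolder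
        _ = pnorm (ENNReal.ofReal p) x * W^(1/q) := by rw [hpx, hW]
        _ ≤ pnorm (ENNReal.ofReal p) x * (D^(1/q) * (u/ε₁)) :=
            mul_le_mul_of_nonneg_left hWq hpx0
    rw [hr, div_le_iff₀ hDq]
    have h3 : u * ε₁ < (pnorm (ENNReal.ofReal p) x * D^(1/q)) * u := by
      calc u * ε₁ < pnorm (ENNReal.ofReal p) x * (D^(1/q) * (u/ε₁)) * ε₁ :=
            mul_lt_mul_of_pos_right hchain2 hε₁pos
        _ = (pnorm (ENNReal.ofReal p) x * D^(1/q)) * u := by field_simp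
    nlinarith [h3, hu0]
  refine le_antisymm ?_ (le_csInf hne ?_)
  · by_contra hcon
    push_neg at hcon
    set t : ℝ := (r + sInf (pnorm (ENNReal.ofReal p) '' Cᶜ)) / (2 * r) with ht
    have ht1 : 1 < t := by
      rw [ht, lt_div_iff₀ (by linarith)]
      linarith
    obtain ⟨hmem, hval⟩ := houtside t ht1
    have hle := csInf_le hbdd (Set.mem_image_of_mem _ hmem)
    rw [hval] at hle
    have htr : t * r = (r + sInf (pnorm (ENNReal.ofReal p) '' Cᶜ)) / 2 := by
      rw [ht]
      field_simp
    rw [htr] at hle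
    linarith
  · rintro y ⟨x, hx, rfl⟩
    exact hlow x hx
end

section
/- Let d ≥ 2, ε_∞ > 0 and ε₁ ∈ (ε_∞, d·ε_∞), and C = conv(B₁(ε₁) ∪ B_∞(ε_∞)). Let β = ε₁/ε_∞ - ⌊ε₁/ε_∞⌋ and let 1/p + 1/q = 1. Then the ℓ_p ball of radius r_p = ε₁/(ε₁/ε_∞ - β + β^q)^{1/q} is contained in C. -/
open scoped ENNReal

namespace CH


/-- floor + fract^q -/
noncomputable def g (q S : ℝ) : ℝ := (⌊S⌋ : ℝ) + (Int.fract S) ^ q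

lemma superadd {q x y : ℝ} (hq : 1 ≤ q) (hx : 0 ≤ x) (hy : 0 ≤ y) :
    x ^ q + y ^ q ≤ (x + y) ^ q := by
  have hq0 : q ≠ 0 := by linarith
  have hxy : 0 ≤ x + y := by linarith
  have e : ∀ z : ℝ, 0 ≤ z → z ^ q = z * z ^ (q - 1) := by
    intro z hz
    rw [show q = 1 + (q-1) by ring, Real.rpow_add' hz (by simpa using hq0), Real.rpow_one]
    ring_nf
  have h1 : x ^ q ≤ x * (x + y) ^ (q - 1) := by
    rw [e x hx]
    exact mul_le_mul_of_nonneg_left (Real.rpow_le_rpow hx (by linarith) (by linarith)) hx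
  have h2 : y ^ q ≤ y * (x + y) ^ (q - 1) := by
    rw [e y hy]
    exact mul_le_mul_of_nonneg_left (Real.rpow_le_rpow hy (by linarith) (by linarith)) hy
  calc x ^ q + y ^ q ≤ (x + y) * (x + y) ^ (q - 1) := by linarith [h1, h2]
    _ = (x + y) ^ q := (e _ hxy).symm

/-- tangent line bound for rpow -/
lemma tangent {q x y : ℝ} (hq : 1 ≤ q) (hx : 0 ≤ x) (hy : 0 < y) :
    y ^ q + q * y ^ (q - 1) * (x - y) ≤ x ^ q := by
  have hs : -1 ≤ x / y - 1 := by
    have : 0 ≤ x / y := div_nonneg hx hy.le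
    linarith
  have hb := one_add_mul_self_le_rpow_one_add hs hq
  rw [show 1 + (x / y - 1) = x / y by ring, Real.div_rpow hx hy.le] at hb
  have hyq : 0 < y ^ q := Real.rpow_pos_of_pos hy q
  have hmul := mul_le_mul_of_nonneg_left hb hyq.le
  rw [mul_div_cancel₀ _ hyq.ne'] at hmul
  have e : y ^ q * (y⁻¹) = y ^ (q - 1) := by
    rw [Real.rpow_sub hy, Real.rpow_one]; ring
  calc y ^ q + q * y ^ (q-1) * (x - y)
      = y ^ q * (1 + q * (x / y - 1)) := by
        rw [← e]; field_simp
    _ ≤ x ^ q := hmul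

lemma convex_pair {q u α t : ℝ} (hq : 1 ≤ q) (hu : 0 ≤ u) (huα : u ≤ α)
    (hα : α ≤ 1) (ht : t ≤ 1) (hsum : α + t = 1 + u) : α ^ q + t ^ q ≤ 1 + u ^ q := by
  rcases eq_or_lt_of_le (huα.trans hα) with h1 | h1
  · have hα1 : α = 1 := le_antisymm hα (h1 ▸ huα)
    have ht1 : t = u := by linarith
    simp [hα1, ht1, Real.one_rpow]
  · set μ := (1 - α) / (1 - u) with hμ
    have h1u : 0 < 1 - u := by linarith
    have hμ0 : 0 ≤ μ := div_nonneg (by linarith) h1u.le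
    have hμ1 : μ ≤ 1 := (div_le_one h1u).mpr (by linarith)
    have cvx := convexOn_rpow hq
    have hmem1 : (1:ℝ) ∈ Set.Ici (0:ℝ) := by norm_num
    have hmemu : u ∈ Set.Ici (0:ℝ) := hu
    have c1 := cvx.2 hmemu hmem1 hμ0 (by linarith : (0:ℝ) ≤ 1 - μ) (by ring)
    have c2 := cvx.2 hmemu hmem1 (by linarith : (0:ℝ) ≤ 1 - μ) hμ0 (by ring)
    simp only [smul_eq_mul, Real.one_rpow, mul_one] at c1 c2
    have e1 : μ * u + (1 - μ) = α := by
      have hm : μ * (1 - u) = 1 - α := by rw [hμ]; exact div_mul_cancel₀ _ h1u.ne'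
      linarith
    have e2 : (1 - μ) * u + μ = t := by
      have ht' : t = 1 + u - α := by linarith
      rw [ht']; linarith [e1]
    rw [e1] at c1; rw [e2] at c2
    linarith

lemma g_step {q S t : ℝ} (hq : 1 < q) (hS : 0 ≤ S) (ht0 : 0 ≤ t) (ht1 : t ≤ 1) :
    g q S + t ^ q ≤ g q (S + t) := by
  have hα0 : 0 ≤ Int.fract S := Int.fract_nonneg S
  have hα1 : Int.fract S < 1 := Int.fract_lt_one S
  have hfl : (⌊S⌋ : ℝ) + Int.fract S = S := Int.floor_add_fract S
  by_cases h : Int.fract S + t < 1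
  · have hfloor : ⌊S + t⌋ = ⌊S⌋ := by
      rw [Int.floor_eq_iff]
      constructor
      · linarith [Int.floor_le S]
      · push_cast; linarith
    have hfract : Int.fract (S + t) = Int.fract S + t := by
      rw [← Int.self_sub_floor, hfloor]; linarith [hfl]
    rw [g, g, hfloor, hfract]
    have := superadd hq.le hα0 ht0
    linarith
  · push_neg at h
    have hfloor : ⌊S + t⌋ = ⌊S⌋ + 1 := by
      rw [Int.floor_eq_iff]
      constructor
      · push_cast; linarith
      · push_cast; linarith
    have hfract : Int.fract (S + t) = Int.fract S + t - 1 := by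
      rw [← Int.self_sub_floor, hfloor]; push_cast; linarith [hfl]
    rw [g, g, hfloor, hfract]
    have hcp := convex_pair (u := Int.fract S + t - 1) (α := Int.fract S) (t := t)
      hq.le (by linarith) (by linarith) hα1.le ht1 (by ring)
    push_cast
    linarith

lemma g_nonneg {q S : ℝ} (hS : 0 ≤ S) : 0 ≤ g q S := by
  have : (0:ℝ) ≤ (⌊S⌋ : ℝ) := by
    have : (0:ℤ) ≤ ⌊S⌋ := Int.floor_nonneg.mpr hS
    exact_mod_cast this
  have := Real.rpow_nonneg (Int.fract_nonneg S) q
  rw [g]; linarith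

lemma major {ι : Type*} {q : ℝ} (hq : 1 < q) (s : Finset ι) (t : ι → ℝ)
    (h0 : ∀ i ∈ s, 0 ≤ t i) (h1 : ∀ i ∈ s, t i ≤ 1) :
    ∑ i ∈ s, t i ^ q ≤ g q (∑ i ∈ s, t i) := by
  classical
  induction s using Finset.cons_induction with
  | empty => simp [g, Real.zero_rpow (by linarith : q ≠ 0)]
  | cons a s ha ih =>
    rw [Finset.sum_cons, Finset.sum_cons]
    have hsum0 : 0 ≤ ∑ i ∈ s, t i :=
      Finset.sum_nonneg fun i hi => h0 i (Finset.mem_cons_of_mem hi)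
    have ih' := ih (fun i hi => h0 i (Finset.mem_cons_of_mem hi))
      (fun i hi => h1 i (Finset.mem_cons_of_mem hi))
    have hstep := g_step hq hsum0 (h0 a (Finset.mem_cons_self a s)) (h1 a (Finset.mem_cons_self a s))
    have : g q (∑ i ∈ s, t i + t a) = g q (t a + ∑ i ∈ s, t i) := by ring_nf
    linarith

lemma g_mono {q a b : ℝ} (hq : 1 < q) (hab : a ≤ b) : g q a ≤ g q b := by
  by_cases h : ⌊a⌋ = ⌊b⌋
  · have : Int.fract a ≤ Int.fract b := by
      rw [← Int.self_sub_floor, ← Int.self_sub_floor, h]; linarith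
    have h2 := Real.rpow_le_rpow (Int.fract_nonneg a) this (by linarith : (0:ℝ) ≤ q)
    simp only [g, h]
    linarith
  · have hlt : ⌊a⌋ < ⌊b⌋ := lt_of_le_of_ne (Int.floor_mono hab) h
    have h1 : Int.fract a ^ q ≤ 1 :=
      Real.rpow_le_one (Int.fract_nonneg a) (Int.fract_lt_one a).le (by linarith)
    have h2 : (0:ℝ) ≤ Int.fract b ^ q := Real.rpow_nonneg (Int.fract_nonneg b) q
    have hc : (⌊a⌋ : ℝ) + 1 ≤ (⌊b⌋ : ℝ) := by exact_mod_cast hlt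
    rw [g, g]; linarith

lemma piece {q m u v : ℝ} (hq : 1 < q) (hm : 1 ≤ m) (hu : 0 ≤ u) (huv : u ≤ v) (hv : v ≤ 1) :
    (m + v ^ q) * (m + u) ^ q ≤ (m + u ^ q) * (m + v) ^ q := by
  rcases eq_or_lt_of_le (hu.trans huv) with hv0 | hv0
  · have hu0 : u = 0 := le_antisymm (huv.trans hv0.symm.le) hu
    rw [← hv0, hu0]
  · -- v > 0
    set A := m + u with hA
    set B := m + v with hB
    have hApos : 0 < A := by dsimp [A]; linarith
    have hQpos : 0 < v * A := mul_pos hv0 hApos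
    have hPQ : u * B ≤ v * A := by dsimp [A, B]; nlinarith
    have hQA : v * A ≤ A := by nlinarith
    have t1 := tangent (x := B) hq.le (by dsimp [B]; linarith) hApos
    have t2 := tangent (x := u * B) hq.le (by dsimp [B]; nlinarith) hQpos
    have hpow : (v * A) ^ (q - 1) ≤ A ^ (q - 1) :=
      Real.rpow_le_rpow hQpos.le hQA (by linarith)
    have hQ1 : 0 ≤ (v * A) ^ (q - 1) := Real.rpow_nonneg hQpos.le _
    have key : (v * A) ^ q - (u * B) ^ q ≤ m * (B ^ q - A ^ q) := by
      have hdiff : v * A - u * B = m * (v - u) := by dsimp [A, B]; ring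
      have hBA : B - A = v - u := by dsimp [A, B]; ring
      have h1 : (v*A) ^ q - (u*B) ^ q ≤ q * (v*A) ^ (q-1) * (v*A - u*B) := by linarith
      have h2 : q * A ^ (q-1) * (B - A) ≤ B ^ q - A ^ q := by linarith
      have h3 : q * (v*A) ^ (q-1) * (v*A - u*B) ≤ q * A ^ (q-1) * (m * (v - u)) := by
        rw [hdiff]
        have hvu : 0 ≤ v - u := by linarith
        have : 0 ≤ q * (m * (v - u)) := by positivity
        nlinarith
      rw [hBA] at h2
      nlinarith
    have e1 : v ^ q * A ^ q = (v * A) ^ q := (Real.mul_rpow hv0.le hApos.le).symm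
    have e2 : u ^ q * B ^ q = (u * B) ^ q := (Real.mul_rpow hu (by dsimp [B]; linarith)).symm
    nlinarith [key, e1, e2]

lemma ratio_aux {q : ℝ} (hq : 1 < q) :
    ∀ (n : ℕ) (a b : ℝ), 1 ≤ a → a ≤ b → (⌊b⌋ - ⌊a⌋).toNat = n →
      g q b * a ^ q ≤ g q a * b ^ q := by
  intro n
  induction n with
  | zero =>
    intro a b ha hab hn
    have hmono := Int.floor_mono hab
    have hfl : ⌊b⌋ = ⌊a⌋ := by omega
    have hm : (1:ℝ) ≤ (⌊a⌋ : ℝ) := by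
      have : (1:ℤ) ≤ ⌊a⌋ := Int.le_floor.mpr (by exact_mod_cast ha)
      exact_mod_cast this
    have hp := piece (m := (⌊a⌋:ℝ)) (u := Int.fract a) (v := Int.fract b) hq hm
      (Int.fract_nonneg a)
      (by rw [← Int.self_sub_floor, ← Int.self_sub_floor, hfl]; linarith)
      (Int.fract_lt_one b).le
    have ea : (⌊a⌋:ℝ) + Int.fract a = a := Int.floor_add_fract a
    have eb : (⌊a⌋:ℝ) + Int.fract b = b := by
      rw [← hfl]; exact_mod_cast Int.floor_add_fract b
    rw [ea, eb] at hp
    rw [g, g, hfl]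
    exact_mod_cast hp
  | succ n ih =>
    intro a b ha hab hn
    set c : ℝ := (⌊a⌋ : ℝ) + 1 with hc
    have hm : (1:ℤ) ≤ ⌊a⌋ := Int.le_floor.mpr (by exact_mod_cast ha)
    have hmR : (1:ℝ) ≤ (⌊a⌋ : ℝ) := by exact_mod_cast hm
    have hfc : ⌊c⌋ = ⌊a⌋ + 1 := by
      rw [hc]
      rw [show ((⌊a⌋:ℝ) + 1) = ((⌊a⌋ + 1 : ℤ) : ℝ) by push_cast; ring, Int.floor_intCast]
    have hbge : ⌊a⌋ + 1 ≤ ⌊b⌋ := by omega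
    have hcb : c ≤ b := by
      have h1 : ((⌊a⌋:ℝ) + 1) ≤ (⌊b⌋ : ℝ) := by exact_mod_cast hbge
      linarith [Int.floor_le b]
    have hac : a ≤ c := by rw [hc]; linarith [Int.lt_floor_add_one a]
    have h1c : (1:ℝ) ≤ c := by rw [hc]; linarith
    have ihc := ih c b h1c hcb (by rw [hfc]; omega)
    have hpc0 := piece (m := (⌊a⌋:ℝ)) (u := Int.fract a) (v := 1) hq hmR
      (Int.fract_nonneg a) (Int.fract_lt_one a).le le_rfl
    rw [Real.one_rpow, Int.floor_add_fract] at hpc0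
    have hgc : g q c = c := by
      have : Int.fract c = 0 := by
        rw [hc, show ((⌊a⌋:ℝ) + 1) = ((⌊a⌋ + 1 : ℤ) : ℝ) by push_cast; ring, Int.fract_intCast]
      rw [g, hfc, this, Real.zero_rpow (by linarith : q ≠ 0), hc]
      push_cast; ring
    have hpc : g q c * a ^ q ≤ g q a * c ^ q := by
      rw [hgc, hc, g]
      exact hpc0
    have haq : (0:ℝ) ≤ a ^ q := Real.rpow_nonneg (by linarith) q
    have hbq : (0:ℝ) ≤ b ^ q := Real.rpow_nonneg (by linarith) q
    have hcq : (0:ℝ) < c ^ q := Real.rpow_pos_of_pos (by linarith) q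
    have h1 := mul_le_mul_of_nonneg_right ihc haq
    have h2 := mul_le_mul_of_nonneg_right hpc hbq
    have key : (g q b * a ^ q) * c ^ q ≤ (g q a * b ^ q) * c ^ q := by nlinarith [h1, h2]
    exact le_of_mul_le_mul_right key hcq
  

lemma scalar {d : ℕ} {ε₁ εinf q : ℝ} (hinf : 0 < εinf) (hε : εinf < ε₁) (hq : 1 < q)
    (y : Fin d → ℝ) (M : ℝ) (hM0 : 0 ≤ M) (hM : ∀ i, |y i| ≤ M) :
    (ε₁ / (ε₁ / εinf - (ε₁ / εinf - (⌊ε₁ / εinf⌋ : ℝ)) + (ε₁ / εinf - (⌊ε₁ / εinf⌋ : ℝ)) ^ q) ^ (1 / q)) *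
      (∑ i, |y i| ^ q) ^ (1 / q) ≤ max (ε₁ * M) (εinf * ∑ i, |y i|) := by
  have hq0 : (0:ℝ) < q := by linarith
  have hε₁ : (0:ℝ) < ε₁ := hinf.trans hε
  set ρ : ℝ := ε₁ / εinf with hρdef
  have hρ1 : 1 < ρ := (one_lt_div hinf).mpr hε
  have hρ0 : 0 < ρ := by linarith
  have hkk : (1:ℤ) ≤ ⌊ρ⌋ := Int.le_floor.mpr (by exact_mod_cast hρ1.le)
  have hk : (1:ℝ) ≤ (⌊ρ⌋:ℝ) := by exact_mod_cast hkk
  have hfr : ρ - (⌊ρ⌋:ℝ) = Int.fract ρ := Int.self_sub_floor ρ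
  have hDe : ρ - (ρ - (⌊ρ⌋:ℝ)) + (ρ - (⌊ρ⌋:ℝ)) ^ q = g q ρ := by
    rw [hfr, g]; linarith [hfr]
  rw [hDe]
  set D : ℝ := g q ρ with hDdef
  have hfq0 : (0:ℝ) ≤ Int.fract ρ ^ q := Real.rpow_nonneg (Int.fract_nonneg ρ) q
  have hDpos : 0 < D := by rw [hDdef, g]; linarith
  have hS0 : (0:ℝ) ≤ ∑ i, |y i| := Finset.sum_nonneg fun i _ => abs_nonneg _
  have hsum0 : (0:ℝ) ≤ ∑ i, |y i| ^ q :=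
    Finset.sum_nonneg fun i _ => Real.rpow_nonneg (abs_nonneg _) q
  have hRHS0 : (0:ℝ) ≤ max (ε₁ * M) (εinf * ∑ i, |y i|) :=
    le_max_of_le_left (by positivity)
  set r : ℝ := ε₁ / D ^ (1/q) with hrdef
  have hDq : (0:ℝ) < D ^ (1/q) := Real.rpow_pos_of_pos hDpos _
  have hr0 : 0 < r := div_pos hε₁ hDq
  have hL0 : (0:ℝ) ≤ r * (∑ i, |y i| ^ q) ^ (1/q) := by positivity
  rw [← Real.rpow_le_rpow_iff hL0 hRHS0 hq0]
  have hrr : (r * (∑ i, |y i| ^ q) ^ (1/q)) ^ q = ε₁ ^ q / D * ∑ i, |y i| ^ q := by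
    rw [Real.mul_rpow hr0.le (Real.rpow_nonneg hsum0 _), hrdef,
      Real.div_rpow hε₁.le hDq.le, one_div,
      Real.rpow_inv_rpow hDpos.le (ne_of_gt hq0), Real.rpow_inv_rpow hsum0 (ne_of_gt hq0)]
  rw [hrr]
  rcases eq_or_lt_of_le hM0 with hM0' | hMpos
  · -- M = 0
    have hy0 : ∀ i, |y i| = 0 := fun i => le_antisymm (hM0' ▸ hM i) (abs_nonneg _)
    have : ∑ i, |y i| ^ q = 0 := by
      apply Finset.sum_eq_zero; intro i _
      rw [hy0 i, Real.zero_rpow (ne_of_gt hq0)]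
    rw [this, mul_zero]
    exact Real.rpow_nonneg hRHS0 q
  · set t : Fin d → ℝ := fun i => |y i| / M with htdef
    have ht0 : ∀ i ∈ Finset.univ, 0 ≤ t i := fun i _ => div_nonneg (abs_nonneg _) hM0
    have ht1 : ∀ i ∈ (Finset.univ : Finset (Fin d)), t i ≤ 1 :=
      fun i _ => (div_le_one hMpos).mpr (hM i)
    have hmaj := major hq Finset.univ t ht0 ht1
    have hsumt : ∑ i, t i = (∑ i, |y i|) / M := by
      rw [htdef]; exact (Finset.sum_div _ _ _).symm
    rw [hsumt] at hmaj
    set S : ℝ := ∑ i, |y i| with hSdef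
    have hMq : (0:ℝ) < M ^ q := Real.rpow_pos_of_pos hMpos q
    have hyq : ∑ i, |y i| ^ q = M ^ q * ∑ i, t i ^ q := by
      rw [Finset.mul_sum]
      apply Finset.sum_congr rfl
      intro i _
      rw [htdef]
      rw [Real.div_rpow (abs_nonneg _) hM0]
      field_simp
    rw [hyq]
    rcases le_total (S / M) ρ with hcase | hcase
    · -- small sum: bound by (ε₁ * M)^q
      have hgm : g q (S / M) ≤ D := hDdef ▸ g_mono hq hcase
      have htD : ∑ i, t i ^ q ≤ D := hmaj.trans hgm
      have step1 : ε₁ ^ q / D * (M ^ q * ∑ i, t i ^ q) ≤ ε₁ ^ q / D * (M ^ q * D) := by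
        apply mul_le_mul_of_nonneg_left _ (by positivity)
        exact mul_le_mul_of_nonneg_left htD hMq.le
      have step2 : ε₁ ^ q / D * (M ^ q * D) = (ε₁ * M) ^ q := by
        rw [Real.mul_rpow hε₁.le hM0]; field_simp
      have step3 : (ε₁ * M) ^ q ≤ (max (ε₁ * M) (εinf * S)) ^ q :=
        Real.rpow_le_rpow (by positivity) (le_max_left _ _) hq0.le
      linarith
    · -- large sum: bound by (εinf * S)^q
      have hρq : (0:ℝ) < ρ ^ q := Real.rpow_pos_of_pos hρ0 q
      have hrat := ratio_aux hq ((⌊S/M⌋ - ⌊ρ⌋).toNat) ρ (S/M) hρ1.le hcase rfl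
      have hgS : g q (S/M) ≤ D * (S/M) ^ q / ρ ^ q := by
        rw [le_div_iff₀ hρq, ← hDdef] at *
        linarith
      have htD : ∑ i, t i ^ q ≤ D * (S/M) ^ q / ρ ^ q := hmaj.trans hgS
      have hSM : M ^ q * (S/M) ^ q = S ^ q := by
        rw [← Real.mul_rpow hM0 (div_nonneg hS0 hM0), mul_div_cancel₀ _ (ne_of_gt hMpos)]
      have step1 : ε₁ ^ q / D * (M ^ q * ∑ i, t i ^ q)
          ≤ ε₁ ^ q / D * (M ^ q * (D * (S/M) ^ q / ρ ^ q)) := by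
        apply mul_le_mul_of_nonneg_left _ (by positivity)
        exact mul_le_mul_of_nonneg_left htD hMq.le
      have step2 : ε₁ ^ q / D * (M ^ q * (D * (S/M) ^ q / ρ ^ q)) = (εinf * S) ^ q := by
        have hdiv : ε₁ / ρ = εinf := by rw [hρdef]; field_simp
        have e4 : εinf ^ q = ε₁ ^ q / ρ ^ q := by
          rw [← hdiv, Real.div_rpow hε₁.le hρ0.le]
        rw [Real.mul_rpow hinf.le hS0, e4, ← hSM]
        field_simp
      have step3 : (εinf * S) ^ q ≤ (max (ε₁ * M) (εinf * S)) ^ q :=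
        Real.rpow_le_rpow (by positivity) (le_max_right _ _) hq0.le
      linarith


lemma pnorm_one_eq {d : ℕ} (x : Fin d → ℝ) :
    ‖(WithLp.equiv 1 (Fin d → ℝ)).symm x‖ = ∑ i, |x i| := by
  rw [PiLp.norm_eq_sum (by norm_num : 0 < (1:ℝ≥0∞).toReal)]
  simp [Real.norm_eq_abs]

lemma pnorm_top_le {d : ℕ} [Nonempty (Fin d)] (x : Fin d → ℝ) (c : ℝ)
    (h : ∀ i, |x i| ≤ c) : ‖(WithLp.equiv ∞ (Fin d → ℝ)).symm x‖ ≤ c := by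
  rw [PiLp.norm_eq_ciSup]
  exact ciSup_le fun i => by simpa [Real.norm_eq_abs] using h i

lemma pnorm_p_eq {d : ℕ} (p : ℝ) (hp : 0 < p) (x : Fin d → ℝ) :
    ‖(WithLp.equiv (ENNReal.ofReal p) (Fin d → ℝ)).symm x‖ = (∑ i, |x i| ^ p) ^ (1/p) := by
  rw [PiLp.norm_eq_sum (by rwa [ENNReal.toReal_ofReal hp.le])]
  simp [Real.norm_eq_abs, ENNReal.toReal_ofReal hp.le]

lemma sign_mul {s : ℝ} : Real.sign s * s = |s| := by
  rcases lt_trichotomy s 0 with h | h | h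
  · rw [Real.sign_of_neg h, abs_of_neg h]; ring
  · simp [h]
  · rw [Real.sign_of_pos h, abs_of_pos h]; ring

lemma abs_sign_le {s : ℝ} : |Real.sign s| ≤ 1 := by
  rcases lt_trichotomy s 0 with h | h | h
  · rw [Real.sign_of_neg h]; norm_num
  · simp [h]
  · rw [Real.sign_of_pos h]; norm_num


end CH

/-- The `ℓ_p` ball of radius `r_p` is contained in the convex hull of the `ℓ₁` and
`ℓ_∞` balls. -/
theorem lp_ball_subset_convexHull {d : ℕ} (hd : 2 ≤ d) (ε₁ εinf : ℝ)
    (hinf : 0 < εinf) (hε : ε₁ ∈ Set.Ioo εinf ((d : ℝ) * εinf))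
    (p q : ℝ) (hp : 1 < p) (hq : 1 < q) (hpq : 1 / p + 1 / q = 1) :
    let C := convexHull ℝ
      ({x : Fin d → ℝ | pnorm 1 x ≤ ε₁} ∪ {x : Fin d → ℝ | pnorm ∞ x ≤ εinf})
    let β : ℝ := ε₁ / εinf - (⌊ε₁ / εinf⌋ : ℝ)
    let r : ℝ := ε₁ / (ε₁ / εinf - β + β ^ q) ^ (1 / q)
    {x : Fin d → ℝ | pnorm (ENNReal.ofReal p) x ≤ r} ⊆ C := by
  intro C β r x hx
  classical
  haveI : Nonempty (Fin d) := ⟨⟨0, by omega⟩⟩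
  have hε₁ : 0 < ε₁ := hinf.trans hε.1
  simp only [Set.mem_setOf_eq] at hx
  by_contra hxC
  -- the two balls
  set K1 : Set (Fin d → ℝ) := {z | pnorm 1 z ≤ ε₁} with hK1def
  set Ki : Set (Fin d → ℝ) := {z | pnorm ∞ z ≤ εinf} with hKidef
  set e1 := PiLp.continuousLinearEquiv 1 ℝ (fun _ : Fin d => ℝ) with he1
  set ei := PiLp.continuousLinearEquiv ∞ ℝ (fun _ : Fin d => ℝ) with hei
  have hK1img : K1 = ⇑e1 '' Metric.closedBall 0 ε₁ := by
    rw [ContinuousLinearEquiv.image_eq_preimage_symm]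
    ext z
    simp [pnorm, he1, Metric.mem_closedBall, dist_zero_right, hK1def]
  have hKiimg : Ki = ⇑ei '' Metric.closedBall 0 εinf := by
    rw [ContinuousLinearEquiv.image_eq_preimage_symm]
    ext z
    simp [pnorm, hei, Metric.mem_closedBall, dist_zero_right, hKidef]
  have hK1comp : IsCompact K1 := by
    rw [hK1img]; exact (isCompact_closedBall 0 ε₁).image e1.continuous
  have hKicomp : IsCompact Ki := by
    rw [hKiimg]; exact (isCompact_closedBall 0 εinf).image ei.continuous
  have hK1conv : Convex ℝ K1 := by
    rw [hK1img]
    exact (convex_closedBall 0 ε₁).is_linear_image ⟨fun a b => map_add e1 a b, fun c a => map_smul e1 c a⟩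
  have hKiconv : Convex ℝ Ki := by
    rw [hKiimg]
    exact (convex_closedBall 0 εinf).is_linear_image ⟨fun a b => map_add ei a b, fun c a => map_smul ei c a⟩
  have hK1ne : K1.Nonempty := ⟨e1 0, hK1img ▸ Set.mem_image_of_mem _ (by simp [hε₁.le])⟩
  have hKine : Ki.Nonempty := ⟨ei 0, hKiimg ▸ Set.mem_image_of_mem _ (by simp [hinf.le])⟩
  have hCjoin : C = convexJoin ℝ K1 Ki := hK1conv.convexHull_union hKiconv hK1ne hKine
  have hCcomp : IsCompact C := by
    rw [hCjoin]
    have himg : convexJoin ℝ K1 Ki =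
        (fun pr : ℝ × ((Fin d → ℝ) × (Fin d → ℝ)) => (1 - pr.1) • pr.2.1 + pr.1 • pr.2.2) ''
          (Set.Icc (0:ℝ) 1 ×ˢ K1 ×ˢ Ki) := by
      ext z
      simp only [mem_convexJoin, Set.mem_image, Set.mem_prod, Set.mem_Icc, Prod.exists]
      constructor
      · rintro ⟨a, ha, b, hb, hz⟩
        rw [segment_eq_image] at hz
        obtain ⟨θ, hθ, hθz⟩ := hz
        exact ⟨θ, a, b, ⟨hθ, ha, hb⟩, hθz⟩
      · rintro ⟨θ, a, b, ⟨hθ, ha, hb⟩, hz⟩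
        refine ⟨a, ha, b, hb, ?_⟩
        rw [segment_eq_image]
        exact ⟨θ, hθ, hz⟩
    rw [himg]
    refine (isCompact_Icc.prod (hK1comp.prod hKicomp)).image ?_
    fun_prop
  have hCconv : Convex ℝ C := convex_convexHull ℝ _
  obtain ⟨f, u, hfu, hux⟩ := geometric_hahn_banach_closed_point hCconv hCcomp.isClosed hxC
  set y : Fin d → ℝ := fun i => f (Pi.single i 1) with hy
  have hsingle : ∀ (z : Fin d → ℝ) (i : Fin d),
      (Pi.single i (z i) : Fin d → ℝ) = z i • (Pi.single i (1:ℝ) : Fin d → ℝ) := by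
    intro z i; funext j
    by_cases h : j = i <;> simp [Pi.single_apply, h, smul_eq_mul]
  have hfz : ∀ z : Fin d → ℝ, f z = ∑ i, z i * y i := by
    intro z
    conv_lhs => rw [← Finset.univ_sum_single z, map_sum]
    refine Finset.sum_congr rfl fun i _ => ?_
    rw [hsingle z i, map_smul, smul_eq_mul, hy]
  -- points of K1 give ε₁ * |y i| < u
  have hA : ∀ i, ε₁ * |y i| < u := by
    intro i
    set c : ℝ := ε₁ * Real.sign (y i) with hc
    set a : Fin d → ℝ := c • (Pi.single i (1:ℝ) : Fin d → ℝ) with ha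
    have haj : ∀ j, a j = if j = i then c else 0 := by
      intro j
      by_cases h : j = i <;> simp [ha, Pi.single_apply, h]
    have haK : a ∈ K1 := by
      rw [hK1def, Set.mem_setOf_eq]
      show pnorm 1 a ≤ ε₁
      rw [pnorm, CH.pnorm_one_eq]
      calc ∑ j, |a j| = |c| := by
            rw [Finset.sum_congr rfl fun j _ => by rw [haj j, apply_ite abs, abs_zero]]
            simp
        _ ≤ ε₁ := by
            rw [hc, abs_mul, abs_of_pos hε₁]
            nlinarith [CH.abs_sign_le (s := y i), abs_nonneg (Real.sign (y i))]
    have hlt := hfu a (subset_convexHull ℝ _ (Or.inl haK))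
    have hfa : f a = ε₁ * |y i| := by
      rw [hfz a]
      rw [Finset.sum_congr rfl fun j _ => by rw [haj j, ite_mul, zero_mul]]
      rw [Finset.sum_ite_eq' Finset.univ i fun j => c * y j]
      simp [hc, mul_assoc, CH.sign_mul]
    rwa [hfa] at hlt
  -- point of Ki gives εinf * ∑ |y i| < u
  have hB : εinf * ∑ i, |y i| < u := by
    set b : Fin d → ℝ := fun i => εinf * Real.sign (y i) with hb
    have hbK : b ∈ Ki := by
      rw [hKidef, Set.mem_setOf_eq]
      show pnorm ∞ b ≤ εinf
      rw [pnorm]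
      apply CH.pnorm_top_le
      intro i
      rw [hb, abs_mul, abs_of_pos hinf]
      nlinarith [CH.abs_sign_le (s := y i), abs_nonneg (Real.sign (y i))]
    have hlt := hfu b (subset_convexHull ℝ _ (Or.inr hbK))
    have hfb : f b = εinf * ∑ i, |y i| := by
      rw [hfz b, Finset.mul_sum]
      exact Finset.sum_congr rfl fun i _ => by rw [hb, mul_assoc, CH.sign_mul]
    rwa [hfb] at hlt
  -- Hölder
  have hconj : p.HolderConjugate q := Real.holderConjugate_iff.mpr ⟨hp, by rw [← one_div, ← one_div]; exact hpq⟩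
  have hhold := Real.inner_le_Lp_mul_Lq Finset.univ x y hconj
  have hxp : (∑ i, |x i| ^ p) ^ (1/p) ≤ r := by
    rwa [pnorm, CH.pnorm_p_eq p (by linarith)] at hx
  have hr0 : 0 ≤ r := by
    have h1 : (0:ℝ) ≤ (∑ i, |x i| ^ p) ^ (1/p) :=
      Real.rpow_nonneg (Finset.sum_nonneg fun i _ => Real.rpow_nonneg (abs_nonneg _) p) _
    linarith
  have hQ0 : (0:ℝ) ≤ (∑ i, |y i| ^ q) ^ (1/q) :=
    Real.rpow_nonneg (Finset.sum_nonneg fun i _ => Real.rpow_nonneg (abs_nonneg _) q) _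
  have hfx : f x ≤ r * (∑ i, |y i| ^ q) ^ (1/q) := by
    rw [hfz x]
    calc ∑ i, x i * y i ≤ (∑ i, |x i| ^ p) ^ (1/p) * (∑ i, |y i| ^ q) ^ (1/q) := hhold
      _ ≤ r * (∑ i, |y i| ^ q) ^ (1/q) := mul_le_mul_of_nonneg_right hxp hQ0
  -- the scalar inequality
  obtain ⟨i₀, -, hi₀⟩ := Finset.exists_max_image Finset.univ (fun i => |y i|) Finset.univ_nonempty
  have hscal := CH.scalar (d := d) hinf hε.1 hq y (|y i₀|) (abs_nonneg _)
    (fun i => hi₀ i (Finset.mem_univ i))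
  have hmax : max (ε₁ * |y i₀|) (εinf * ∑ i, |y i|) < u := max_lt (hA i₀) hB
  -- r matches the constant in `scalar`
  have : r * (∑ i, |y i| ^ q) ^ (1/q) < u := lt_of_le_of_lt hscal hmax
  linarith [hux, hfx]
end

section
/- In ℝ², with ε_∞ > 0 and ε₁ ∈ (ε_∞, 2ε_∞), the convex hull C of B₁(ε₁) ∪ B_∞(ε_∞) is an octagon, and the minimal ℓ₂ distance from the origin to ℝ² \ C equals ε₁/√(ε₁/ε_∞ - β + β²) where β = ε₁/ε_∞ - 1. -/
/-- The eight vertices of the octagon. -/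
private def octPts (a b : ℝ) : Set (ℝ × ℝ) :=
  {(a, 0), (-a, 0), (0, a), (0, -a), (b, b), (b, -b), (-b, b), (-b, -b)}

/-- The union of the diamond and the square. -/
private def octSet (a b : ℝ) : Set (ℝ × ℝ) :=
  {v : ℝ × ℝ | |v.1| + |v.2| ≤ a} ∪ {v : ℝ × ℝ | max |v.1| |v.2| ≤ b}

private lemma sq_mem_hull (a b : ℝ) (hb : 0 < b) (v : ℝ × ℝ)
    (h : max |v.1| |v.2| ≤ b) : v ∈ convexHull ℝ (octPts a b) := by
  have hK := convex_convexHull ℝ (octPts a b)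
  have hx : |v.1| ≤ b := le_trans (le_max_left _ _) h
  have hy : |v.2| ≤ b := le_trans (le_max_right _ _) h
  have hx1 : -b ≤ v.1 := neg_le_of_abs_le hx
  have hx2 : v.1 ≤ b := le_of_abs_le hx
  have hy1 : -b ≤ v.2 := neg_le_of_abs_le hy
  have hy2 : v.2 ≤ b := le_of_abs_le hy
  have hb0 : (b : ℝ) ≠ 0 := hb.ne'
  have ht0 : 0 ≤ (b + v.1) / (2 * b) := div_nonneg (by linarith) (by linarith)
  have ht1 : 0 ≤ 1 - (b + v.1) / (2 * b) := by
    have : (b + v.1) / (2 * b) ≤ 1 := (div_le_one (by linarith)).2 (by linarith)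
    linarith
  have hts : (b + v.1) / (2 * b) + (1 - (b + v.1) / (2 * b)) = 1 := by ring
  have htop : ((v.1, b) : ℝ × ℝ) ∈ convexHull ℝ (octPts a b) := by
    have e : ((v.1, b) : ℝ × ℝ) =
        ((b + v.1) / (2 * b)) • ((b, b) : ℝ × ℝ)
          + (1 - (b + v.1) / (2 * b)) • ((-b, b) : ℝ × ℝ) := by
      simp only [Prod.smul_mk, smul_eq_mul, Prod.mk_add_mk, Prod.mk.injEq]
      constructor <;> field_simp <;> ring
    rw [e]
    exact hK (subset_convexHull ℝ _ (by simp [octPts]))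
      (subset_convexHull ℝ _ (by simp [octPts])) ht0 ht1 hts
  have hbot : ((v.1, -b) : ℝ × ℝ) ∈ convexHull ℝ (octPts a b) := by
    have e : ((v.1, -b) : ℝ × ℝ) =
        ((b + v.1) / (2 * b)) • ((b, -b) : ℝ × ℝ)
          + (1 - (b + v.1) / (2 * b)) • ((-b, -b) : ℝ × ℝ) := by
      simp only [Prod.smul_mk, smul_eq_mul, Prod.mk_add_mk, Prod.mk.injEq]
      constructor <;> field_simp <;> ring
    rw [e]
    exact hK (subset_convexHull ℝ _ (by simp [octPts]))
      (subset_convexHull ℝ _ (by simp [octPts])) ht0 ht1 hts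
  have hs0 : 0 ≤ (b + v.2) / (2 * b) := div_nonneg (by linarith) (by linarith)
  have hs1 : 0 ≤ 1 - (b + v.2) / (2 * b) := by
    have : (b + v.2) / (2 * b) ≤ 1 := (div_le_one (by linarith)).2 (by linarith)
    linarith
  have e : v = ((b + v.2) / (2 * b)) • ((v.1, b) : ℝ × ℝ)
      + (1 - (b + v.2) / (2 * b)) • ((v.1, -b) : ℝ × ℝ) := by
    have : v = (v.1, v.2) := rfl
    rw [this]
    simp only [Prod.smul_mk, smul_eq_mul, Prod.mk_add_mk, Prod.mk.injEq]
    constructor <;> field_simp <;> ring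
  rw [e]
  exact hK htop hbot hs0 hs1 (by ring)

private lemma dia_mem_hull (a b : ℝ) (ha : 0 < a) (v : ℝ × ℝ)
    (h : |v.1| + |v.2| ≤ a) : v ∈ convexHull ℝ (octPts a b) := by
  have hK := convex_convexHull ℝ (octPts a b)
  have hy0 : 0 ≤ |v.2| := abs_nonneg _
  have hx0 : 0 ≤ |v.1| := abs_nonneg _
  have hx : |v.1| ≤ a := by linarith
  have hxa1 : v.1 ≤ a := le_of_abs_le hx
  have hxa2 : -a ≤ v.1 := neg_le_of_abs_le hx
  have hP : ((v.1, a - |v.1|) : ℝ × ℝ) ∈ convexHull ℝ (octPts a b) := by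
    rcases le_or_gt 0 v.1 with hs | hs
    · have e : ((v.1, a - |v.1|) : ℝ × ℝ) =
          (v.1 / a) • ((a, 0) : ℝ × ℝ) + ((a - v.1) / a) • ((0, a) : ℝ × ℝ) := by
        rw [abs_of_nonneg hs]
        simp only [Prod.smul_mk, smul_eq_mul, Prod.mk_add_mk, Prod.mk.injEq]
        constructor <;> field_simp <;> ring
      rw [e]
      exact hK (subset_convexHull ℝ _ (by simp [octPts]))
        (subset_convexHull ℝ _ (by simp [octPts]))
        (div_nonneg hs ha.le) (div_nonneg (by linarith) ha.le) (by field_simp <;> ring)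
    · have e : ((v.1, a - |v.1|) : ℝ × ℝ) =
          (-v.1 / a) • ((-a, 0) : ℝ × ℝ) + ((a + v.1) / a) • ((0, a) : ℝ × ℝ) := by
        rw [abs_of_neg hs]
        simp only [Prod.smul_mk, smul_eq_mul, Prod.mk_add_mk, Prod.mk.injEq]
        constructor <;> field_simp <;> ring
      rw [e]
      exact hK (subset_convexHull ℝ _ (by simp [octPts]))
        (subset_convexHull ℝ _ (by simp [octPts]))
        (div_nonneg (by linarith) ha.le) (div_nonneg (by linarith) ha.le) (by field_simp <;> ring)
  have hQ : ((v.1, |v.1| - a) : ℝ × ℝ) ∈ convexHull ℝ (octPts a b) := by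
    rcases le_or_gt 0 v.1 with hs | hs
    · have e : ((v.1, |v.1| - a) : ℝ × ℝ) =
          (v.1 / a) • ((a, 0) : ℝ × ℝ) + ((a - v.1) / a) • ((0, -a) : ℝ × ℝ) := by
        rw [abs_of_nonneg hs]
        simp only [Prod.smul_mk, smul_eq_mul, Prod.mk_add_mk, Prod.mk.injEq]
        constructor <;> field_simp <;> ring
      rw [e]
      exact hK (subset_convexHull ℝ _ (by simp [octPts]))
        (subset_convexHull ℝ _ (by simp [octPts]))
        (div_nonneg hs ha.le) (div_nonneg (by linarith) ha.le) (by field_simp <;> ring)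
    · have e : ((v.1, |v.1| - a) : ℝ × ℝ) =
          (-v.1 / a) • ((-a, 0) : ℝ × ℝ) + ((a + v.1) / a) • ((0, -a) : ℝ × ℝ) := by
        rw [abs_of_neg hs]
        simp only [Prod.smul_mk, smul_eq_mul, Prod.mk_add_mk, Prod.mk.injEq]
        constructor <;> field_simp <;> ring
      rw [e]
      exact hK (subset_convexHull ℝ _ (by simp [octPts]))
        (subset_convexHull ℝ _ (by simp [octPts]))
        (div_nonneg (by linarith) ha.le) (div_nonneg (by linarith) ha.le) (by field_simp <;> ring)
  rcases eq_or_lt_of_le hx with he | hlt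
  · have h2 : v.2 = 0 := by
      have h3 : |v.2| ≤ 0 := by linarith
      have := abs_nonneg v.2
      exact abs_eq_zero.1 (le_antisymm h3 this)
    rcases (abs_eq ha.le).1 he with h1 | h1
    · exact subset_convexHull ℝ _ (by
        have : v = ((a, 0) : ℝ × ℝ) := Prod.ext h1 h2
        rw [this]; simp [octPts])
    · exact subset_convexHull ℝ _ (by
        have : v = ((-a, 0) : ℝ × ℝ) := Prod.ext h1 h2
        rw [this]; simp [octPts])
  · set m := a - |v.1| with hm
    have hm0 : 0 < m := by simp only [hm]; linarith
    have hym : |v.2| ≤ m := by simp only [hm]; linarith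
    have hy1 : -m ≤ v.2 := neg_le_of_abs_le hym
    have hy2 : v.2 ≤ m := le_of_abs_le hym
    have ht0 : 0 ≤ (m + v.2) / (2 * m) := div_nonneg (by linarith) (by linarith)
    have ht1 : 0 ≤ 1 - (m + v.2) / (2 * m) := by
      have : (m + v.2) / (2 * m) ≤ 1 := (div_le_one (by linarith)).2 (by linarith)
      linarith
    have hma : |v.1| - a = -m := by simp [hm]
    rw [hma] at hQ
    have e : v = ((m + v.2) / (2 * m)) • ((v.1, m) : ℝ × ℝ)
        + (1 - (m + v.2) / (2 * m)) • ((v.1, -m) : ℝ × ℝ) := by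
      have hv : v = (v.1, v.2) := rfl
      rw [hv]
      simp only [Prod.smul_mk, smul_eq_mul, Prod.mk_add_mk, Prod.mk.injEq]
      constructor <;> field_simp <;> ring
    rw [e]
    have hPm : ((v.1, m) : ℝ × ℝ) ∈ convexHull ℝ (octPts a b) := hP
    exact hK hPm hQ ht0 ht1 (by ring)

private lemma quad_mem (a b : ℝ) (hb : 0 < b) (hba : b < a)
    (x y : ℝ) (hx : 0 ≤ x) (hy : 0 ≤ y)
    (h1 : b * x + (a - b) * y ≤ a * b) (h2 : (a - b) * x + b * y ≤ a * b) :
    (⟨x, y⟩ : ℝ × ℝ) ∈ convexHull ℝ (octSet a b) := by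
  have hK := convex_convexHull ℝ (octSet a b)
  have hab : 0 < a - b := by linarith
  rcases le_or_gt y b with hyb | hyb
  · rcases le_or_gt x b with hxb | hxb
    · exact subset_convexHull ℝ _ (Or.inr (by
        simp only [Set.mem_setOf_eq, abs_of_nonneg hx, abs_of_nonneg hy, max_le_iff]
        exact ⟨hxb, hyb⟩))
    · -- b < x, so y < b
      have hyb' : y < b := by nlinarith
      have hbx : (0:ℝ) < b - y := by linarith
      set c := b * (x - y) / (b - y) with hc
      have hc0 : 0 ≤ c := div_nonneg (by nlinarith) hbx.le
      have hca : c ≤ a := by rw [div_le_iff₀ hbx]; nlinarith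
      have hP : ((c, 0) : ℝ × ℝ) ∈ convexHull ℝ (octSet a b) :=
        subset_convexHull ℝ _ (Or.inl (by
          simp only [Set.mem_setOf_eq, abs_of_nonneg hc0, abs_zero, add_zero]; exact hca))
      have hQ : ((b, b) : ℝ × ℝ) ∈ convexHull ℝ (octSet a b) :=
        subset_convexHull ℝ _ (Or.inr (by
          simp only [Set.mem_setOf_eq, abs_of_nonneg hb.le, max_self, le_refl]))
      have ht0 : 0 ≤ 1 - y / b := by
        have : y / b ≤ 1 := (div_le_one hb).2 hyb'.le
        linarith
      have ht1 : 0 ≤ y / b := div_nonneg hy hb.le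
      have e : (⟨x, y⟩ : ℝ × ℝ) =
          (1 - y / b) • ((c, 0) : ℝ × ℝ) + (y / b) • ((b, b) : ℝ × ℝ) := by
        simp only [Prod.smul_mk, smul_eq_mul, Prod.mk_add_mk, Prod.mk.injEq]
        constructor
        · rw [hc]; field_simp; ring
        · field_simp; ring
      rw [e]
      exact hK hP hQ ht0 ht1 (by ring)
  · -- b < y, so x < b
    have hxb' : x < b := by nlinarith
    have hbx : (0:ℝ) < b - x := by linarith
    set c := b * (y - x) / (b - x) with hc
    have hc0 : 0 ≤ c := div_nonneg (by nlinarith) hbx.le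
    have hca : c ≤ a := by rw [div_le_iff₀ hbx]; nlinarith
    have hP : ((0, c) : ℝ × ℝ) ∈ convexHull ℝ (octSet a b) :=
      subset_convexHull ℝ _ (Or.inl (by
        simp only [Set.mem_setOf_eq, abs_of_nonneg hc0, abs_zero, zero_add]; exact hca))
    have hQ : ((b, b) : ℝ × ℝ) ∈ convexHull ℝ (octSet a b) :=
      subset_convexHull ℝ _ (Or.inr (by
        simp only [Set.mem_setOf_eq, abs_of_nonneg hb.le, max_self, le_refl]))
    have ht0 : 0 ≤ 1 - x / b := by
      have : x / b ≤ 1 := (div_le_one hb).2 hxb'.le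
      linarith
    have ht1 : 0 ≤ x / b := div_nonneg hx hb.le
    have e : (⟨x, y⟩ : ℝ × ℝ) =
        (1 - x / b) • ((0, c) : ℝ × ℝ) + (x / b) • ((b, b) : ℝ × ℝ) := by
      simp only [Prod.smul_mk, smul_eq_mul, Prod.mk_add_mk, Prod.mk.injEq]
      constructor
      · field_simp; ring
      · rw [hc]; field_simp; ring
    rw [e]
    exact hK hP hQ ht0 ht1 (by ring)

private lemma flip_fst (a b : ℝ) (v : ℝ × ℝ)
    (h : v ∈ convexHull ℝ (octSet a b)) :
    (⟨-v.1, v.2⟩ : ℝ × ℝ) ∈ convexHull ℝ (octSet a b) := by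
  set f : (ℝ × ℝ) →ₗ[ℝ] (ℝ × ℝ) := (-(LinearMap.fst ℝ ℝ ℝ)).prod (LinearMap.snd ℝ ℝ ℝ) with hf
  have hfv : ∀ w : ℝ × ℝ, f w = (-w.1, w.2) := fun w => rfl
  have himg : f '' octSet a b = octSet a b := by
    ext w
    constructor
    · rintro ⟨u, hu, rfl⟩
      rw [hfv]
      rcases hu with h' | h'
      · exact Or.inl (by simpa [abs_neg] using h')
      · exact Or.inr (by simpa [abs_neg] using h')
    · intro hw
      refine ⟨(-w.1, w.2), ?_, by rw [hfv]; simp⟩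
      rcases hw with h' | h'
      · exact Or.inl (by simpa [abs_neg] using h')
      · exact Or.inr (by simpa [abs_neg] using h')
  have h2 := Set.mem_image_of_mem f h
  rw [f.image_convexHull, himg] at h2
  rw [hfv] at h2
  exact h2

private lemma flip_snd (a b : ℝ) (v : ℝ × ℝ)
    (h : v ∈ convexHull ℝ (octSet a b)) :
    (⟨v.1, -v.2⟩ : ℝ × ℝ) ∈ convexHull ℝ (octSet a b) := by
  set f : (ℝ × ℝ) →ₗ[ℝ] (ℝ × ℝ) := (LinearMap.fst ℝ ℝ ℝ).prod (-(LinearMap.snd ℝ ℝ ℝ)) with hf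
  have hfv : ∀ w : ℝ × ℝ, f w = (w.1, -w.2) := fun w => rfl
  have himg : f '' octSet a b = octSet a b := by
    ext w
    constructor
    · rintro ⟨u, hu, rfl⟩
      rw [hfv]
      rcases hu with h' | h'
      · exact Or.inl (by simpa [abs_neg] using h')
      · exact Or.inr (by simpa [abs_neg] using h')
    · intro hw
      refine ⟨(w.1, -w.2), ?_, by rw [hfv]; simp⟩
      rcases hw with h' | h'
      · exact Or.inl (by simpa [abs_neg] using h')
      · exact Or.inr (by simpa [abs_neg] using h')
  have h2 := Set.mem_image_of_mem f h
  rw [f.image_convexHull, himg] at h2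
  rw [hfv] at h2
  exact h2

private lemma H_mem (a b : ℝ) (hb : 0 < b) (hba : b < a) (v : ℝ × ℝ)
    (h1 : b * |v.1| + (a - b) * |v.2| ≤ a * b)
    (h2 : (a - b) * |v.1| + b * |v.2| ≤ a * b) :
    v ∈ convexHull ℝ (octSet a b) := by
  have habs : (⟨|v.1|, |v.2|⟩ : ℝ × ℝ) ∈ convexHull ℝ (octSet a b) :=
    quad_mem a b hb hba _ _ (abs_nonneg _) (abs_nonneg _) h1 h2
  rcases abs_choice v.1 with e1 | e1 <;> rcases abs_choice v.2 with e2 | e2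
  · rw [e1, e2] at habs; simpa using habs
  · have := flip_snd a b _ habs
    simp only at this
    rw [e1, e2, neg_neg] at this
    simpa using this
  · have := flip_fst a b _ habs
    simp only at this
    rw [e1, e2, neg_neg] at this
    simpa using this
  · have := flip_snd a b _ (flip_fst a b _ habs)
    simp only at this
    rw [e1, e2, neg_neg, neg_neg] at this
    simpa using this

private def Hset (a b : ℝ) : Set (ℝ × ℝ) :=
  {v : ℝ × ℝ | b * |v.1| + (a - b) * |v.2| ≤ a * b ∧ (a - b) * |v.1| + b * |v.2| ≤ a * b}

private lemma Hset_convex (a b : ℝ) (hb : 0 ≤ b) (hba : b ≤ a) :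
    Convex ℝ (Hset a b) := by
  intro p hp q hq s t hs ht hst
  obtain ⟨hp1, hp2⟩ := hp
  obtain ⟨hq1, hq2⟩ := hq
  have hab : 0 ≤ a - b := by linarith
  have c1 : (s • p + t • q).1 = s * p.1 + t * q.1 := rfl
  have c2 : (s • p + t • q).2 = s * p.2 + t * q.2 := rfl
  have A : |s * p.1 + t * q.1| ≤ s * |p.1| + t * |q.1| := by
    calc |s * p.1 + t * q.1| ≤ |s * p.1| + |t * q.1| := abs_add_le _ _
    _ = s * |p.1| + t * |q.1| := by rw [abs_mul, abs_mul, abs_of_nonneg hs, abs_of_nonneg ht]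
  have B : |s * p.2 + t * q.2| ≤ s * |p.2| + t * |q.2| := by
    calc |s * p.2 + t * q.2| ≤ |s * p.2| + |t * q.2| := abs_add_le _ _
    _ = s * |p.2| + t * |q.2| := by rw [abs_mul, abs_mul, abs_of_nonneg hs, abs_of_nonneg ht]
  constructor
  · rw [c1, c2]
    calc b * |s * p.1 + t * q.1| + (a - b) * |s * p.2 + t * q.2|
        ≤ b * (s * |p.1| + t * |q.1|) + (a - b) * (s * |p.2| + t * |q.2|) := by
          exact add_le_add (mul_le_mul_of_nonneg_left A hb) (mul_le_mul_of_nonneg_left B hab)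
      _ = s * (b * |p.1| + (a - b) * |p.2|) + t * (b * |q.1| + (a - b) * |q.2|) := by ring
      _ ≤ s * (a * b) + t * (a * b) :=
          add_le_add (mul_le_mul_of_nonneg_left hp1 hs) (mul_le_mul_of_nonneg_left hq1 ht)
      _ = a * b := by rw [← add_mul, hst, one_mul]
  · rw [c1, c2]
    calc (a - b) * |s * p.1 + t * q.1| + b * |s * p.2 + t * q.2|
        ≤ (a - b) * (s * |p.1| + t * |q.1|) + b * (s * |p.2| + t * |q.2|) := by
          exact add_le_add (mul_le_mul_of_nonneg_left A hab) (mul_le_mul_of_nonneg_left B hb)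
      _ = s * ((a - b) * |p.1| + b * |p.2|) + t * ((a - b) * |q.1| + b * |q.2|) := by ring
      _ ≤ s * (a * b) + t * (a * b) :=
          add_le_add (mul_le_mul_of_nonneg_left hp2 hs) (mul_le_mul_of_nonneg_left hq2 ht)
      _ = a * b := by rw [← add_mul, hst, one_mul]

private lemma hull_subset_Hset (a b : ℝ) (hb : 0 < b) (hba : b < a) (hab : a < 2 * b) :
    convexHull ℝ (octSet a b) ⊆ Hset a b := by
  apply convexHull_min _ (Hset_convex a b hb.le hba.le)
  rintro v (hv | hv)
  · have hx := abs_nonneg v.1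
    have hy := abs_nonneg v.2
    simp only [Set.mem_setOf_eq] at hv
    constructor <;> [skip; skip] <;> nlinarith
  · have hx : |v.1| ≤ b := le_trans (le_max_left _ _) hv
    have hy : |v.2| ≤ b := le_trans (le_max_right _ _) hv
    have := abs_nonneg v.1
    have := abs_nonneg v.2
    constructor <;> nlinarith

private lemma hull_eq (a b : ℝ) (hb : 0 < b) (hba : b < a) :
    convexHull ℝ (octSet a b) = convexHull ℝ (octPts a b) := by
  have ha : 0 < a := lt_trans hb hba
  apply Set.Subset.antisymm
  · apply convexHull_min _ (convex_convexHull ℝ _)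
    rintro v (hv | hv)
    · exact dia_mem_hull a b ha v hv
    · exact sq_mem_hull a b hb v hv
  · apply convexHull_mono
    intro v hv
    simp only [octPts, Set.mem_insert_iff, Set.mem_singleton_iff] at hv
    rcases hv with rfl | rfl | rfl | rfl | rfl | rfl | rfl | rfl
    · exact Or.inl (by simp [abs_of_nonneg ha.le])
    · exact Or.inl (by simp [abs_of_nonneg ha.le])
    · exact Or.inl (by simp [abs_of_nonneg ha.le])
    · exact Or.inl (by simp [abs_of_nonneg ha.le])
    · exact Or.inr (by simp [abs_of_nonneg hb.le])
    · exact Or.inr (by simp [abs_of_nonneg hb.le])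
    · exact Or.inr (by simp [abs_of_nonneg hb.le])
    · exact Or.inr (by simp [abs_of_nonneg hb.le])

set_option maxHeartbeats 1000000 in
private lemma part2 (a b : ℝ) (hb : 0 < b) (hba : b < a) (hab : a < 2 * b) :
    sInf ((fun v : ℝ × ℝ => Real.sqrt (v.1 ^ 2 + v.2 ^ 2)) '' (convexHull ℝ (octSet a b))ᶜ) =
      a / Real.sqrt (a / b - (a / b - 1) + (a / b - 1) ^ 2) := by
  have ha : 0 < a := lt_trans hb hba
  set D : ℝ := b ^ 2 + (a - b) ^ 2 with hD
  have hD0 : 0 < D := by positivity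
  have hsD : 0 < Real.sqrt D := Real.sqrt_pos.2 hD0
  have hsD2 : Real.sqrt D ^ 2 = D := Real.sq_sqrt hD0.le
  have key : a / Real.sqrt (a / b - (a / b - 1) + (a / b - 1) ^ 2) = a * b / Real.sqrt D := by
    have hβ : a / b - (a / b - 1) + (a / b - 1) ^ 2 = D / b ^ 2 := by
      rw [hD]; field_simp; ring
    rw [hβ, Real.sqrt_div hD0.le, Real.sqrt_sq hb.le, div_div_eq_mul_div]
  rw [key]
  set d : ℝ := a * b / Real.sqrt D with hd
  have hd0 : 0 < d := by positivity
  have hdD : d * Real.sqrt D = a * b := by rw [hd]; field_simp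
  have hd2 : d ^ 2 * D = a ^ 2 * b ^ 2 := by
    have h' : d ^ 2 = (a * b) ^ 2 / D := by rw [hd, div_pow, hsD2]
    rw [h']; field_simp
  have hCH := hull_subset_Hset a b hb hba hab
  have hne : ((fun v : ℝ × ℝ => Real.sqrt (v.1 ^ 2 + v.2 ^ 2)) ''
      (convexHull ℝ (octSet a b))ᶜ).Nonempty := by
    refine ⟨_, ⟨(2 * a, 0), ?_, rfl⟩⟩
    intro hmem
    have h1 := (hCH hmem).1
    simp only [Set.mem_setOf_eq] at h1
    rw [abs_of_nonneg (by positivity : (0:ℝ) ≤ ((2*a, (0:ℝ)) : ℝ × ℝ).1), abs_zero] at h1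
    simp only at h1
    nlinarith
  have hbdd : BddBelow ((fun v : ℝ × ℝ => Real.sqrt (v.1 ^ 2 + v.2 ^ 2)) ''
      (convexHull ℝ (octSet a b))ᶜ) := by
    refine ⟨0, ?_⟩
    rintro t ⟨v, hv, rfl⟩
    exact Real.sqrt_nonneg _
  apply le_antisymm
  · -- sInf ≤ d
    apply le_of_forall_pos_le_add
    intro ε hε
    set q : ℝ × ℝ := ((d + ε) * b / Real.sqrt D, (d + ε) * (a - b) / Real.sqrt D) with hq
    have hq1 : 0 ≤ q.1 := by
      rw [hq]; exact div_nonneg (by positivity) hsD.le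
    have hq2 : 0 ≤ q.2 := by
      rw [hq]
      exact div_nonneg (mul_nonneg (by positivity) (by linarith)) hsD.le
    have e : b * q.1 + (a - b) * q.2 = (d + ε) * Real.sqrt D := by
      have e1 : b * q.1 + (a - b) * q.2 = (d + ε) * D / Real.sqrt D := by
        rw [hq]; simp only; rw [hD]; ring
      rw [e1, div_eq_iff hsD.ne', mul_assoc, Real.mul_self_sqrt hD0.le]
    have hqC : q ∉ convexHull ℝ (octSet a b) := by
      intro hmem
      have h1 := (hCH hmem).1
      rw [abs_of_nonneg hq1, abs_of_nonneg hq2, e] at h1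
      nlinarith
    have hv : q.1 ^ 2 + q.2 ^ 2 = (d + ε) ^ 2 := by
      rw [hq]
      simp only
      rw [div_pow, div_pow, hsD2, ← add_div, div_eq_iff hD0.ne', hD]
      ring
    have hval : Real.sqrt (q.1 ^ 2 + q.2 ^ 2) = d + ε := by
      rw [hv]; exact Real.sqrt_sq (by positivity)
    exact csInf_le hbdd ⟨q, hqC, hval⟩
  · -- d ≤ sInf
    apply le_csInf hne
    rintro t ⟨v, hv, rfl⟩
    by_contra hlt
    push_neg at hlt
    have hs0 : (0:ℝ) ≤ v.1 ^ 2 + v.2 ^ 2 := by positivity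
    have hss : v.1 ^ 2 + v.2 ^ 2 < d ^ 2 := by
      have h' := mul_self_lt_mul_self (Real.sqrt_nonneg _) hlt
      rw [Real.mul_self_sqrt hs0] at h'
      nlinarith
    have hDs : D * (v.1 ^ 2 + v.2 ^ 2) < a ^ 2 * b ^ 2 := by nlinarith
    have c1 : b * |v.1| + (a - b) * |v.2| < a * b := by
      have hX2 : (b * |v.1| + (a - b) * |v.2|) ^ 2 < (a * b) ^ 2 := by
        nlinarith [sq_nonneg ((a - b) * |v.1| - b * |v.2|), sq_abs v.1, sq_abs v.2]
      have := lt_of_pow_lt_pow_left₀ 2 (by positivity : (0:ℝ) ≤ a * b) hX2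
      linarith
    have c2 : (a - b) * |v.1| + b * |v.2| < a * b := by
      have hX2 : ((a - b) * |v.1| + b * |v.2|) ^ 2 < (a * b) ^ 2 := by
        nlinarith [sq_nonneg (b * |v.1| - (a - b) * |v.2|), sq_abs v.1, sq_abs v.2]
      have := lt_of_pow_lt_pow_left₀ 2 (by positivity : (0:ℝ) ≤ a * b) hX2
      linarith
    exact hv (H_mem a b hb hba v c1.le c2.le)

/-- In `ℝ²`, for `ε_∞ < ε₁ < 2ε_∞`, the convex hull of the `ℓ₁` diamond and the `ℓ_∞`
square is the octagon spanned by the four diamond tips and four square corners, and the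
minimal `ℓ₂` distance from the origin to its complement is
`ε₁/√(ε₁/ε_∞ - β + β²)` with `β = ε₁/ε_∞ - 1`. -/
theorem octagon_minimal_l2_distance (ε₁ εinf : ℝ) (hinf : 0 < εinf)
    (hε : ε₁ ∈ Set.Ioo εinf (2 * εinf)) :
    let B₁ : Set (ℝ × ℝ) := {v | |v.1| + |v.2| ≤ ε₁}
    let Binf : Set (ℝ × ℝ) := {v | max |v.1| |v.2| ≤ εinf}
    let C := convexHull ℝ (B₁ ∪ Binf)
    let β : ℝ := ε₁ / εinf - 1
    C = convexHull ℝ ({(ε₁, 0), (-ε₁, 0), (0, ε₁), (0, -ε₁), (εinf, εinf),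
        (εinf, -εinf), (-εinf, εinf), (-εinf, -εinf)} : Set (ℝ × ℝ)) ∧
    sInf ((fun v : ℝ × ℝ => Real.sqrt (v.1 ^ 2 + v.2 ^ 2)) '' Cᶜ) =
      ε₁ / Real.sqrt (ε₁ / εinf - β + β ^ 2) := by
  obtain ⟨hba, hab2⟩ := hε
  intro B₁ Binf C β
  constructor
  · show convexHull ℝ (octSet ε₁ εinf) = convexHull ℝ (octPts ε₁ εinf)
    exact hull_eq ε₁ εinf hinf hba
  · show sInf ((fun v : ℝ × ℝ => Real.sqrt (v.1 ^ 2 + v.2 ^ 2)) ''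
        (convexHull ℝ (octSet ε₁ εinf))ᶜ) =
      ε₁ / Real.sqrt (ε₁ / εinf - (ε₁ / εinf - 1) + (ε₁ / εinf - 1) ^ 2)
    exact part2 ε₁ εinf hinf hba hab2
end
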